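/- arXiv:2101.00748 — 3 statements merged into one kernel-verified Lean document; each statement's English description precedes it below -/
import Mathlib

section
/- Let γ = -1 if d = 2 and γ = -(d-2)/2 if d ≥ 3. Suppose that 12q^γ + 8q^{d+2}/|E|² + 48q^{(d+1)/2}/|E| ≤ 1. Then |C_5^prod(E) - |E|⁵/q⁵| ≤ (|E|⁵/q⁵)·(12q^γ + 8q^{(2d+3)/2}/|E|² + 32q^{(d+1)/2}/|E|). -/
open Finset
open scoped Classical

/-- The number of cycles of length `n` in the dot-product graph of `E`: tuples
`(x₀,…,x_{n-1}) ∈ Eⁿ` with `x_i · x_{i+1} = t` cyclically, where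
`x·y = x₁y₁ + ⋯ + x_dy_d`. -/
noncomputable def cycleCountProd (F : Type) [Field F] [Fintype F] [DecidableEq F]
    (d n : ℕ) (t : F) (E : Finset (Fin d → F)) : ℕ :=
  (Finset.univ.filter (fun x : Fin n → (Fin d → F) =>
    (∀ i, x i ∈ E) ∧
    ∀ i : Fin n, ∑ j, x i j * x ⟨(i.val + 1) % n, Nat.mod_lt _ i.pos⟩ j = t)).card

open Matrix
open scoped Matrix.Norms.L2Operator

/-!
Write `q = |F|`, `n = |E|` and let `u` be the indicator vector of `E`. Then `C₅(E) = tr B⁵`, where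
`B` is the adjacency matrix of the graph `x·y = t` restricted to `E`, and `B = q⁻¹ u uᵀ + M` with
`M = diag u · A₀ · diag u`, `A₀(x, y) = [x·y = t] - q⁻¹`.

Counting the solutions of one or of two independent linear equations gives the Gram matrix of the
columns of `A₀`: `A₀ᵀA₀ = q^(d-1) I - q^(d-2) R`, where `R(y, y')` is the number of `a ∈ Fˣ` with
`a • y = y'`. The quadratic form of `R` is `(q - 1)⁻¹ ∑ₓ (∑ₐ v(a • x))² ≥ 0`, so
`‖M‖ ≤ ‖A₀‖ ≤ q^((d-1)/2)`.

The rank-one part `J = q⁻¹ u uᵀ` satisfies `tr J⁵ = (n/q)⁵` and `|tr (W J)| ≤ ‖W‖ n/q`. Expanding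
`(J + M)⁵`, every mixed word can be rotated to end in `J`, which bounds the mixed terms by
`30 ‖M‖ (n/q)⁴`, while `|tr M⁵| ≤ ‖M‖³ ∑ M(x, y)²` and `∑ M(x, y)² ≤ ‖M‖ n + n²/q + n²/q²`.
The size hypothesis makes these errors fit under the stated bound.
-/

theorem dotProduct_sq_le_dotProduct_self_mul {n : Type*} [Fintype n] (u w : n → ℝ) :
    (u ⬝ᵥ w) ^ 2 ≤ (u ⬝ᵥ u) * (w ⬝ᵥ w) := by
  simpa [dotProduct, sq] using sum_mul_sq_le_sq_mul_sq univ u w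

namespace Matrix

variable {n : Type*} [Fintype n]

theorem mulVec_dotProduct_mulVec_eq_sum {m R : Type*} [Fintype m] [CommSemiring R]
    (A : Matrix m n R) (v : n → R) :
    A *ᵥ v ⬝ᵥ A *ᵥ v = ∑ y, ∑ y', (∑ x, A x y * A x y') * (v y * v y') := by
  simp only [dotProduct, mulVec, sum_mul_sum]
  simp only [sum_mul]
  rw [sum_comm]
  refine sum_congr rfl fun y _ => ?_
  rw [sum_comm]
  exact sum_congr rfl fun y' _ => sum_congr rfl fun x _ => by ring

theorem trace_mul_sq_le (A B : Matrix n n ℝ) :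
    (A * B).trace ^ 2 ≤ (∑ i, ∑ j, A i j ^ 2) * ∑ i, ∑ j, B i j ^ 2 := by
  have h := sum_mul_sq_le_sq_mul_sq univ (fun p : n × n => A p.1 p.2) (fun p => B p.2 p.1)
  simp only [Fintype.sum_prod_type] at h
  rwa [sum_comm (f := fun i j => B j i ^ 2)] at h

variable [DecidableEq n]

theorem mulVec_dotProduct_mulVec_le (A : Matrix n n ℝ) (w : n → ℝ) :
    A *ᵥ w ⬝ᵥ A *ᵥ w ≤ ‖A‖ ^ 2 * (w ⬝ᵥ w) := by
  have h := pow_le_pow_left₀ (norm_nonneg _) (l2_opNorm_mulVec A (WithLp.toLp 2 w)) 2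
  rw [mul_pow, EuclideanSpace.real_norm_sq_eq, EuclideanSpace.real_norm_sq_eq] at h
  simpa [dotProduct, sq] using h

theorem l2_opNorm_le_sqrt {A : Matrix n n ℝ} {c : ℝ}
    (h : ∀ w, A *ᵥ w ⬝ᵥ A *ᵥ w ≤ c * (w ⬝ᵥ w)) : ‖A‖ ≤ √c := by
  rw [cstar_norm_def]
  refine ContinuousLinearMap.opNorm_le_bound _ (Real.sqrt_nonneg c) fun w => ?_
  rw [← Real.sqrt_sq (norm_nonneg w), ← Real.sqrt_mul' _ (sq_nonneg _)]
  refine Real.le_sqrt_of_sq_le ?_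
  rw [EuclideanSpace.real_norm_sq_eq, EuclideanSpace.real_norm_sq_eq]
  simpa [dotProduct, sq] using h w.ofLp

theorem abs_dotProduct_mulVec_le (A : Matrix n n ℝ) (u : n → ℝ) :
    |u ⬝ᵥ A *ᵥ u| ≤ ‖A‖ * (u ⬝ᵥ u) := by
  have hu : 0 ≤ u ⬝ᵥ u := by simpa using dotProduct_star_self_nonneg u
  refine abs_le_of_sq_le_sq ?_ (by positivity)
  calc (u ⬝ᵥ A *ᵥ u) ^ 2 ≤ (u ⬝ᵥ u) * (A *ᵥ u ⬝ᵥ A *ᵥ u) := dotProduct_sq_le_dotProduct_self_mul _ _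
    _ ≤ (u ⬝ᵥ u) * (‖A‖ ^ 2 * (u ⬝ᵥ u)) := by
        gcongr
        exact A.mulVec_dotProduct_mulVec_le u
    _ = (‖A‖ * (u ⬝ᵥ u)) ^ 2 := by ring

theorem sum_sq_mul_le (A B : Matrix n n ℝ) :
    ∑ i, ∑ j, (A * B) i j ^ 2 ≤ ‖A‖ ^ 2 * ∑ i, ∑ j, B i j ^ 2 := by
  have hcol (j : n) : ∑ i, (A * B) i j ^ 2 = A *ᵥ Bᵀ j ⬝ᵥ A *ᵥ Bᵀ j := by
    simp [dotProduct, mulVec, mul_apply, sq]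
  rw [sum_comm, sum_comm (f := fun i j => B i j ^ 2), mul_sum]
  refine sum_le_sum fun j _ => ?_
  rw [hcol]
  simpa [dotProduct, sq] using A.mulVec_dotProduct_mulVec_le (Bᵀ j)

theorem abs_trace_pow_le (B : Matrix n n ℝ) (k : ℕ) :
    |(B ^ (k + 2)).trace| ≤ ‖B‖ ^ k * ∑ i, ∑ j, B i j ^ 2 := by
  have hpow : ∀ k : ℕ, ∑ i, ∑ j, (B ^ k * B) i j ^ 2 ≤ (‖B‖ ^ 2) ^ k * ∑ i, ∑ j, B i j ^ 2 := by
    intro k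
    induction k with
    | zero => simp
    | succ k ih =>
      rw [pow_succ', Matrix.mul_assoc]
      calc ∑ i, ∑ j, (B * (B ^ k * B)) i j ^ 2 ≤ ‖B‖ ^ 2 * ∑ i, ∑ j, (B ^ k * B) i j ^ 2 :=
            sum_sq_mul_le _ _
        _ ≤ ‖B‖ ^ 2 * ((‖B‖ ^ 2) ^ k * ∑ i, ∑ j, B i j ^ 2) := by gcongr
        _ = _ := by ring
  refine abs_le_of_sq_le_sq ?_ (by positivity)
  rw [show B ^ (k + 2) = B * (B ^ k * B) by rw [pow_succ', pow_succ]]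
  calc _ ≤ (∑ i, ∑ j, B i j ^ 2) * ∑ i, ∑ j, (B ^ k * B) i j ^ 2 := trace_mul_sq_le _ _
    _ ≤ (∑ i, ∑ j, B i j ^ 2) * ((‖B‖ ^ 2) ^ k * ∑ i, ∑ j, B i j ^ 2) := by
        gcongr
        exact hpow k
    _ = _ := by ring

theorem trace_smul_vecMulVec_self_pow (c : ℝ) (u : n → ℝ) (k : ℕ) :
    ((c • vecMulVec u u) ^ (k + 1)).trace = (c * (u ⬝ᵥ u)) ^ (k + 1) := by
  have hsq : (c • vecMulVec u u) * (c • vecMulVec u u) = (c * (u ⬝ᵥ u)) • (c • vecMulVec u u) := by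
    rw [Matrix.smul_mul, Matrix.mul_smul, vecMulVec_mul_vecMulVec, vecMulVec_smul, smul_smul,
      smul_smul, smul_smul]
    congr 1
    ring
  have hpow : (c • vecMulVec u u) ^ (k + 1) = (c * (u ⬝ᵥ u)) ^ k • (c • vecMulVec u u) := by
    induction k with
    | zero => simp
    | succ k ih => rw [pow_succ, ih, Matrix.smul_mul, hsq, smul_smul, pow_succ]
  rw [hpow, trace_smul, trace_smul, trace_vecMulVec, smul_eq_mul, smul_eq_mul, pow_succ]

theorem abs_trace_mul_smul_vecMulVec_le {c : ℝ} (hc : 0 ≤ c) (A : Matrix n n ℝ) (u : n → ℝ) :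
    |(A * (c • vecMulVec u u)).trace| ≤ ‖A‖ * (c * (u ⬝ᵥ u)) := by
  rw [Matrix.mul_smul, trace_smul, mul_vecMulVec, trace_vecMulVec, smul_eq_mul, abs_mul,
    abs_of_nonneg hc, dotProduct_comm, mul_left_comm]
  exact mul_le_mul_of_nonneg_left (A.abs_dotProduct_mulVec_le u) hc

theorem norm_smul_vecMulVec_le {c : ℝ} (hc : 0 ≤ c) (u : n → ℝ) :
    ‖c • vecMulVec u u‖ ≤ c * (u ⬝ᵥ u) := by
  have hu : 0 ≤ u ⬝ᵥ u := by simpa using dotProduct_star_self_nonneg u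
  have h : ‖vecMulVec u u‖ ≤ u ⬝ᵥ u := by
    refine (l2_opNorm_le_sqrt fun w => ?_).trans_eq (Real.sqrt_sq hu)
    rw [vecMulVec_mulVec, op_smul_eq_smul, dotProduct_smul, smul_dotProduct, smul_eq_mul,
      smul_eq_mul]
    nlinarith [dotProduct_sq_le_dotProduct_self_mul u w]
  rw [norm_smul, Real.norm_of_nonneg hc]
  exact mul_le_mul_of_nonneg_left h hc

theorem trace_add_pow_five {R : Type*} [CommRing R] (J M : Matrix n n R) :
    ((J + M) ^ 5).trace = (J ^ 5).trace +
      (((J + M) ^ 3 * M + (J + M) ^ 2 * M * J + (J + M) * M * J ^ 2 + M * J ^ 3) * J).trace +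
      ((M * (J + M) ^ 3 + M ^ 2 * (J + M) ^ 2 + M ^ 3 * (J + M) + M ^ 4) * J).trace +
      (M ^ 5).trace := by
  have h : (J + M) ^ 5 = J ^ 5 +
      ((J + M) ^ 3 * M + (J + M) ^ 2 * M * J + (J + M) * M * J ^ 2 + M * J ^ 3) * J +
      ((J + M) ^ 3 * J * M + (J + M) ^ 2 * J * M ^ 2 + (J + M) * J * M ^ 3 + J * M ^ 4) +
      M ^ 5 := by
    noncomm_ring
  rw [h]
  simp only [add_mul, mul_add, trace_add, trace_mul_cycle _ J M, trace_mul_cycle _ J (M ^ _),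
    trace_mul_comm J]

theorem abs_trace_add_pow_five_sub_le {c : ℝ} (hc : 0 ≤ c) (u : n → ℝ) (M : Matrix n n ℝ)
    (hM : ‖M‖ ≤ c * (u ⬝ᵥ u)) :
    |((c • vecMulVec u u + M) ^ 5).trace - (c * (u ⬝ᵥ u)) ^ 5| ≤
      30 * ‖M‖ * (c * (u ⬝ᵥ u)) ^ 4 + |(M ^ 5).trace| := by
  set J := c • vecMulVec u u
  set e := c * (u ⬝ᵥ u)
  set m := ‖M‖
  set X := J + M
  have he : 0 ≤ e := (norm_nonneg M).trans hM
  have hJ : ‖J‖ ≤ e := norm_smul_vecMulVec_le hc u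
  have hX : ‖X‖ ≤ 2 * e := (norm_add_le J M).trans (by linarith)
  have hpow {A : Matrix n n ℝ} {a : ℝ} (hA : ‖A‖ ≤ a) (k : ℕ) : ‖A ^ (k + 1)‖ ≤ a ^ (k + 1) :=
    (norm_pow_le' A k.succ_pos).trans (pow_le_pow_left₀ (norm_nonneg A) hA _)
  have hMpow (k : ℕ) : ‖M ^ (k + 1)‖ ≤ m * e ^ k :=
    (hpow le_rfl k).trans (by rw [pow_succ']; gcongr)
  have hW₁ : ‖X ^ 3 * M + X ^ 2 * M * J + X * M * J ^ 2 + M * J ^ 3‖ ≤ 15 * m * e ^ 3 := by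
    calc _ ≤ (2 * e) ^ 3 * m + (2 * e) ^ 2 * m * e + 2 * e * m * e ^ 2 + m * e ^ 3 := by
          refine norm_add₄_le.trans ?_
          gcongr
          · exact norm_mul_le_of_le (hpow hX 2) le_rfl
          · exact norm_mul_le_of_le (norm_mul_le_of_le (hpow hX 1) le_rfl) hJ
          · exact norm_mul_le_of_le (norm_mul_le_of_le hX le_rfl) (hpow hJ 1)
          · exact norm_mul_le_of_le le_rfl (hpow hJ 2)
      _ = 15 * m * e ^ 3 := by ring
  have hW₂ : ‖M * X ^ 3 + M ^ 2 * X ^ 2 + M ^ 3 * X + M ^ 4‖ ≤ 15 * m * e ^ 3 := by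
    calc _ ≤ m * (2 * e) ^ 3 + m * e * (2 * e) ^ 2 + m * e ^ 2 * (2 * e) + m * e ^ 3 := by
          refine norm_add₄_le.trans ?_
          gcongr
          · exact norm_mul_le_of_le le_rfl (hpow hX 2)
          · exact norm_mul_le_of_le (by simpa using hMpow 1) (hpow hX 1)
          · exact norm_mul_le_of_le (hMpow 2) hX
          · exact hMpow 3
      _ = 15 * m * e ^ 3 := by ring
  rw [trace_add_pow_five, trace_smul_vecMulVec_self_pow c u 4, add_sub_right_comm,
    add_sub_right_comm, add_sub_right_comm, sub_self, zero_add]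
  calc _ ≤ _ := abs_add_three _ _ _
    _ ≤ 15 * m * e ^ 3 * e + 15 * m * e ^ 3 * e + |(M ^ 5).trace| := by
        gcongr <;> exact (abs_trace_mul_smul_vecMulVec_le hc _ u).trans (by gcongr)
    _ = _ := by ring

end Matrix

theorem Fintype.sum_fin_succ_pi {α M : Type*} [Fintype α] [AddCommMonoid M] {k : ℕ}
    (f : (Fin (k + 1) → α) → M) : ∑ x, f x = ∑ a, ∑ x : Fin k → α, f (vecCons a x) := by
  rw [← (Fin.consEquiv fun _ => α).sum_comp, Fintype.sum_prod_type]
  rfl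

theorem Matrix.trace_pow_five {V : Type*} [Fintype V] [DecidableEq V] (B : Matrix V V ℝ) :
    (B ^ 5).trace = ∑ x : Fin 5 → V, ∏ i, B (x i) (x (i + 1)) := by
  simp only [Fintype.sum_fin_succ_pi, Fin.prod_univ_five, Finset.univ_unique, sum_singleton]
  simp [trace, pow_succ', mul_apply, mul_sum, mul_assoc]

theorem sum_sum_mul_smul_nonneg {G X : Type*} [Group G] [Fintype G] [MulAction G X] [Fintype X]
    (v : X → ℝ) : 0 ≤ ∑ x, ∑ g : G, v x * v (g • x) := by
  have key : ∑ x, (∑ g : G, v (g • x)) ^ 2 = Fintype.card G * ∑ x, ∑ g : G, v x * v (g • x) := by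
    calc ∑ x, (∑ g : G, v (g • x)) ^ 2 = ∑ g : G, ∑ h : G, ∑ x, v (g • x) * v (h • x) := by
          simp_rw [sq, sum_mul_sum]
          rw [sum_comm]
          exact sum_congr rfl fun _ _ => sum_comm
      _ = ∑ g : G, ∑ h : G, ∑ x, v x * v ((h * g⁻¹) • x) := by
          refine sum_congr rfl fun g _ => sum_congr rfl fun h _ => ?_
          exact Fintype.sum_equiv (MulAction.toPerm g) _ _ fun x => by simp [mul_smul]
      _ = ∑ _g : G, ∑ h : G, ∑ x, v x * v (h • x) :=
          sum_congr rfl fun g _ => Fintype.sum_equiv (Equiv.mulRight g⁻¹) _ _ fun _ => rfl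
      _ = _ := by rw [sum_const, card_univ, nsmul_eq_mul, sum_comm]
  have hG : (0 : ℝ) < Fintype.card G := by exact_mod_cast Fintype.card_pos
  exact (mul_nonneg_iff_of_pos_left hG).mp (key ▸ by positivity)

section LinearEquations

variable {F : Type*} [Field F] [Fintype F] [DecidableEq F] {ι : Type*} [Fintype ι] [DecidableEq ι]

theorem AddMonoidHom.card_fiber_mul_card_of_surjective {G W : Type*} [AddGroup G] [Fintype G]
    [AddMonoid W] [Fintype W] [DecidableEq W] (f : G →+ W) (hf : Function.Surjective f) (w : W) :
    #{g | f g = w} * Fintype.card W = Fintype.card G := by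
  calc #{g | f g = w} * Fintype.card W = ∑ w' : W, #{g | f g = w'} := by
        rw [sum_congr rfl fun w' _ => card_fiber_eq_of_mem_range f (hf w') (hf w), sum_const,
          card_univ, smul_eq_mul, mul_comm]
    _ = Fintype.card G := (card_eq_sum_card_fiberwise fun g _ => mem_univ (f g)).symm

theorem Matrix.card_mulVec_eq_mul_pow {m : Type*} [Fintype m] [DecidableEq m]
    (A : Matrix m ι F) (hA : LinearIndependent F A.row) (c : m → F) :
    #{z | A *ᵥ z = c} * Fintype.card F ^ Fintype.card m = Fintype.card F ^ Fintype.card ι := by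
  have hsurj : Function.Surjective A.mulVecLin := by
    refine LinearMap.range_eq_top.mp (Submodule.eq_top_of_finrank_eq ?_)
    rw [← rank, hA.rank_matrix, Module.finrank_fintype_fun_eq_card]
  have h := A.mulVecLin.toAddMonoidHom.card_fiber_mul_card_of_surjective hsurj c
  rw [Fintype.card_fun, Fintype.card_fun] at h
  convert h using 3
  ext z
  rw [mem_filter, mem_filter]
  rfl

theorem Matrix.sum_comp_mulVec {m : Type*} [Fintype m] [DecidableEq m]
    (A : Matrix m ι F) (hA : LinearIndependent F A.row) (φ : (m → F) → ℝ) :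
    ∑ z, φ (A *ᵥ z) = (Fintype.card F : ℝ) ^ Fintype.card ι / (Fintype.card F : ℝ) ^ Fintype.card m
      * ∑ c, φ c := by
  have hcard (c : m → F) : (#{z | A *ᵥ z = c} : ℝ) =
      (Fintype.card F : ℝ) ^ Fintype.card ι / (Fintype.card F : ℝ) ^ Fintype.card m := by
    rw [eq_div_iff (by positivity)]
    exact_mod_cast A.card_mulVec_eq_mul_pow hA c
  rw [← sum_fiberwise univ (A *ᵥ ·), mul_sum]
  refine sum_congr rfl fun c _ => ?_
  rw [sum_congr rfl fun z hz => congrArg φ (mem_filter.mp hz).2, sum_const, nsmul_eq_mul, hcard]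

theorem sum_comp_dotProduct {y : ι → F} (hy : y ≠ 0) (φ : F → ℝ) :
    ∑ x, φ (y ⬝ᵥ x) = (Fintype.card F : ℝ) ^ Fintype.card ι / Fintype.card F * ∑ a, φ a := by
  have h := (of ![y]).sum_comp_mulVec (linearIndependent_unique_iff.mpr hy) (fun c => φ (c 0))
  rw [Fintype.sum_equiv (Equiv.funUnique (Fin 1) F) (fun c => φ (c 0)) φ fun _ => rfl] at h
  simpa [mulVec] using h

theorem sum_comp_dotProduct_pair {y y' : ι → F} (h : LinearIndependent F ![y, y'])
    (φ : F → F → ℝ) :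
    ∑ x, φ (y ⬝ᵥ x) (y' ⬝ᵥ x) =
      (Fintype.card F : ℝ) ^ Fintype.card ι / Fintype.card F ^ 2 * ∑ a, ∑ b, φ a b := by
  have h := (of ![y, y']).sum_comp_mulVec h (fun c => φ (c 0) (c 1))
  rw [Fintype.sum_equiv (finTwoArrowEquiv F) (fun c => φ (c 0) (c 1)) (fun p => φ p.1 p.2)
    fun _ => rfl,
    Fintype.sum_prod_type] at h
  simpa [mulVec] using h

end LinearEquations

theorem sum_units_smul_eq_smul {F V : Type*} [Field F] [Fintype F] [DecidableEq F] [AddCommGroup V]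
    [Module F V] [DecidableEq V] {y : V} (hy : y ≠ 0) (b : F) :
    ∑ a : Fˣ, (if a • y = b • y then 1 else 0 : ℝ) = if b = 0 then 0 else 1 := by
  simp_rw [Units.smul_def, (smul_left_injective F hy).eq_iff]
  split_ifs with hb
  · simp [hb]
  · have hunit (a : Fˣ) : (a : F) = b ↔ a = Units.mk0 b hb := by rw [Units.ext_iff, Units.val_mk0]
    simp [hunit]

section CenteredDotMatrix

variable {F : Type*} [Field F] [Fintype F] [DecidableEq F] {ι : Type*} [Fintype ι] [DecidableEq ι]

noncomputable def centeredIndicator (t a : F) : ℝ :=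
  (if a = t then 1 else 0) - (Fintype.card F : ℝ)⁻¹

theorem sum_centeredIndicator (t : F) : ∑ a, centeredIndicator t a = 0 := by
  simp [centeredIndicator, sum_sub_distrib]

theorem centeredIndicator_sq_le (t a : F) :
    centeredIndicator t a ^ 2 ≤ (if a = t then 1 else 0) + (Fintype.card F : ℝ)⁻¹ ^ 2 := by
  have : (0 : ℝ) ≤ (Fintype.card F : ℝ)⁻¹ := by positivity
  unfold centeredIndicator
  split_ifs <;> nlinarith

theorem centeredIndicator_zero {t : F} (ht : t ≠ 0) :
    centeredIndicator t 0 = -(Fintype.card F : ℝ)⁻¹ := by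
  simp [centeredIndicator, ht.symm]

theorem sum_centeredIndicator_mul_comp_mul {t b : F} (ht : t ≠ 0) (hb : b ≠ 0) :
    ∑ a, centeredIndicator t a * centeredIndicator t (b * a) =
      (if b = 1 then 1 else 0) - (Fintype.card F : ℝ)⁻¹ := by
  have hba (a : F) : b * a = t ↔ a = t / b := by rw [eq_div_iff hb, mul_comm]
  have htb : t / b = t ↔ b = 1 := by rw [div_eq_iff hb, eq_comm, mul_eq_left₀ ht]
  have hq : (Fintype.card F : ℝ) ≠ 0 := by positivity
  simp only [centeredIndicator, hba, sub_mul, mul_sub, ite_mul, mul_ite, one_mul, mul_one,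
    zero_mul, mul_zero, sum_sub_distrib, sum_ite_eq', mem_univ, if_true, htb,
    sum_const, card_univ, nsmul_eq_mul]
  rw [mul_inv_cancel_left₀ hq, sub_self, sub_zero]

noncomputable def centeredDotMatrix (t : F) : Matrix (ι → F) (ι → F) ℝ :=
  of fun x y => centeredIndicator t (x ⬝ᵥ y)

theorem sum_centeredDotMatrix_mul {t : F} (ht : t ≠ 0) (y y' : ι → F) :
    ∑ x, centeredDotMatrix t x y * centeredDotMatrix t x y' =
      (Fintype.card F : ℝ) ^ Fintype.card ι / Fintype.card F * (if y = y' then 1 else 0) -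
        (Fintype.card F : ℝ) ^ Fintype.card ι / Fintype.card F ^ 2 *
          ∑ a : Fˣ, if a • y = y' then 1 else 0 := by
  have hq : (Fintype.card F : ℝ) ≠ 0 := by positivity
  simp only [centeredDotMatrix, of_apply, dotProduct_comm _ y, dotProduct_comm _ y']
  rcases eq_or_ne y 0 with rfl | hy
  · simp only [zero_dotProduct, centeredIndicator_zero ht, smul_zero, ← mul_sum]
    rcases eq_or_ne y' 0 with rfl | hy'
    · have hunits : (Fintype.card Fˣ : ℝ) = Fintype.card F - 1 := by
        rw [Fintype.card_units, Nat.cast_sub Fintype.card_pos, Nat.cast_one]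
      simp [centeredIndicator_zero ht, hunits]
      field_simp
      ring
    · rw [sum_comp_dotProduct hy', sum_centeredIndicator]
      simp [hy'.symm]
  · by_cases hdep : ∃ b : F, b • y = y'
    · obtain ⟨b, rfl⟩ := hdep
      simp only [smul_dotProduct, smul_eq_mul]
      rw [sum_comp_dotProduct hy fun a => centeredIndicator t a * centeredIndicator t (b * a),
        sum_units_smul_eq_smul hy]
      rcases eq_or_ne b 0 with rfl | hb
      · simp [centeredIndicator_zero ht, ← sum_mul, sum_centeredIndicator, hy]
      · have hb1 : y = b • y ↔ b = 1 := by
          rw [eq_comm, ← (smul_left_injective F hy).eq_iff, one_smul]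
        rw [sum_centeredIndicator_mul_comp_mul ht hb, if_neg hb]
        simp only [hb1]
        field_simp
    · rw [not_exists] at hdep
      have hyy : y ≠ y' := by simpa using hdep 1
      rw [sum_comp_dotProduct_pair ((LinearIndependent.pair_iff' hy).mpr hdep)
        fun a b => centeredIndicator t a * centeredIndicator t b]
      simp [← mul_sum, sum_centeredIndicator, Units.smul_def, hdep, hyy]

theorem norm_centeredDotMatrix_le {t : F} (ht : t ≠ 0) :
    ‖(centeredDotMatrix t : Matrix (ι → F) (ι → F) ℝ)‖ ≤
      √((Fintype.card F : ℝ) ^ Fintype.card ι / Fintype.card F) := by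
  refine l2_opNorm_le_sqrt fun v => ?_
  set P := (Fintype.card F : ℝ) ^ Fintype.card ι
  calc _ = ∑ y, ∑ y', (P / Fintype.card F * (if y = y' then 1 else 0) -
          P / Fintype.card F ^ 2 * ∑ a : Fˣ, if a • y = y' then 1 else 0) * (v y * v y') := by
        simp only [mulVec_dotProduct_mulVec_eq_sum, sum_centeredDotMatrix_mul ht]
        rfl
    _ = P / Fintype.card F * (v ⬝ᵥ v) -
          P / Fintype.card F ^ 2 * ∑ y, ∑ a : Fˣ, v y * v (a • y) := by
        simp only [sub_mul, sum_sub_distrib, mul_assoc, ← mul_sum, sum_mul, ite_mul, one_mul,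
          zero_mul, sum_ite_eq, mem_univ, if_true, dotProduct]
        congr 2
        refine sum_congr rfl fun y _ => ?_
        rw [sum_comm, mul_sum]
        simp
    _ ≤ P / Fintype.card F * (v ⬝ᵥ v) :=
        sub_le_self _ (mul_nonneg (by positivity) (sum_sum_mul_smul_nonneg v))

end CenteredDotMatrix

section Restriction

variable {V : Type*} [Fintype V] [DecidableEq V]

theorem dotProduct_indicator_self (E : Finset V) :
    (E : Set V).indicator 1 ⬝ᵥ (E : Set V).indicator 1 = (#E : ℝ) := by
  simp [dotProduct, Set.indicator_apply]

theorem norm_diagonal_indicator_mul_mul_le (E : Finset V) (A : Matrix V V ℝ) :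
    ‖diagonal ((E : Set V).indicator 1) * A * diagonal ((E : Set V).indicator 1)‖ ≤ ‖A‖ := by
  have hD : ‖(diagonal ((E : Set V).indicator 1) : Matrix V V ℝ)‖ ≤ 1 := by
    rw [l2_opNorm_diagonal]
    refine pi_norm_le_iff_of_nonneg zero_le_one |>.mpr fun x => ?_
    by_cases hx : x ∈ E <;> simp [hx]
  calc _ ≤ 1 * ‖A‖ * 1 := norm_mul_le_of_le (norm_mul_le_of_le hD le_rfl) hD
    _ = ‖A‖ := by ring

variable {F : Type*} [Field F] [Fintype F] [DecidableEq F] {ι : Type*} [Fintype ι] [DecidableEq ι]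

noncomputable def restrictedDotMatrix (t : F) (E : Finset (ι → F)) : Matrix (ι → F) (ι → F) ℝ :=
  of fun x y => if x ∈ E ∧ y ∈ E ∧ x ⬝ᵥ y = t then 1 else 0

noncomputable def centeredRestrictedDotMatrix (t : F) (E : Finset (ι → F)) :
    Matrix (ι → F) (ι → F) ℝ :=
  diagonal ((E : Set (ι → F)).indicator 1) * centeredDotMatrix t *
    diagonal ((E : Set (ι → F)).indicator 1)

theorem restrictedDotMatrix_eq (t : F) (E : Finset (ι → F)) :
    restrictedDotMatrix t E =
      (Fintype.card F : ℝ)⁻¹ • vecMulVec ((E : Set (ι → F)).indicator 1) ((E : Set _).indicator 1) +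
        centeredRestrictedDotMatrix t E := by
  ext x y
  simp only [restrictedDotMatrix, centeredRestrictedDotMatrix, centeredDotMatrix,
    centeredIndicator, of_apply, Matrix.add_apply, Matrix.smul_apply, vecMulVec_apply,
    diagonal_mul, mul_diagonal, Set.indicator_apply, Finset.mem_coe, Pi.one_apply, smul_eq_mul]
  split_ifs <;> simp_all

theorem sum_sq_centeredRestrictedDotMatrix_le (t : F) (E : Finset (ι → F)) :
    ∑ x, ∑ y, centeredRestrictedDotMatrix t E x y ^ 2 ≤
      ‖centeredRestrictedDotMatrix t E‖ * #E + (#E : ℝ) ^ 2 / Fintype.card F +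
        (#E : ℝ) ^ 2 / Fintype.card F ^ 2 := by
  set M := centeredRestrictedDotMatrix t E
  set u : (ι → F) → ℝ := (E : Set (ι → F)).indicator 1
  set s : ℝ := (Fintype.card F : ℝ)⁻¹
  have hentry (x y : ι → F) : M x y ^ 2 ≤ restrictedDotMatrix t E x y + s ^ 2 * (u x * u y) := by
    by_cases hx : x ∈ E <;> by_cases hy : y ∈ E <;>
      simp [M, u, s, centeredRestrictedDotMatrix, restrictedDotMatrix, centeredDotMatrix, hx, hy]
    simpa using centeredIndicator_sq_le t (x ⬝ᵥ y)
  have hsum : ∑ x, ∑ y, restrictedDotMatrix t E x y = u ⬝ᵥ restrictedDotMatrix t E *ᵥ u := by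
    simp only [dotProduct, mulVec, mul_sum]
    refine sum_congr rfl fun x _ => sum_congr rfl fun y _ => ?_
    by_cases hx : x ∈ E <;> by_cases hy : y ∈ E <;> simp [u, restrictedDotMatrix, hx, hy]
  have hquad : u ⬝ᵥ restrictedDotMatrix t E *ᵥ u = s * #E ^ 2 + u ⬝ᵥ M *ᵥ u := by
    rw [restrictedDotMatrix_eq, add_mulVec, dotProduct_add, smul_mulVec, vecMulVec_mulVec,
      op_smul_eq_smul, dotProduct_smul, dotProduct_smul, dotProduct_indicator_self, smul_eq_mul,
      smul_eq_mul, sq]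
  have hu : ∑ x, u x = #E := by simp [u, Set.indicator_apply]
  calc ∑ x, ∑ y, M x y ^ 2 ≤ ∑ x, ∑ y, (restrictedDotMatrix t E x y + s ^ 2 * (u x * u y)) :=
        sum_le_sum fun x _ => sum_le_sum fun y _ => hentry x y
    _ = s * #E ^ 2 + u ⬝ᵥ M *ᵥ u + s ^ 2 * #E ^ 2 := by
        simp only [sum_add_distrib, ← mul_sum, hsum, hquad, hu]
        rw [← sum_mul, hu]
        ring
    _ ≤ s * #E ^ 2 + ‖M‖ * #E + s ^ 2 * #E ^ 2 := by
        have h := (le_abs_self _).trans (M.abs_dotProduct_mulVec_le u)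
        rw [dotProduct_indicator_self] at h
        gcongr
    _ = _ := by simp only [s]; ring

end Restriction

theorem cycleCountProd_five_eq_trace {F : Type} [Field F] [Fintype F] [DecidableEq F] {d : ℕ}
    (t : F) (E : Finset (Fin d → F)) :
    (cycleCountProd F d 5 t E : ℝ) = (restrictedDotMatrix t E ^ 5).trace := by
  rw [trace_pow_five, cycleCountProd, natCast_card_filter]
  refine sum_congr rfl fun x _ => ?_
  have hsucc (i : Fin 5) : (⟨(i.val + 1) % 5, Nat.mod_lt _ i.pos⟩ : Fin 5) = i + 1 :=
    Fin.ext (by simp [Fin.val_add])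
  simp only [restrictedDotMatrix, of_apply, prod_boole, mem_univ, true_implies, hsucc]
  congr 1
  exact propext ⟨fun ⟨hE, ht⟩ i => ⟨hE i, hE (i + 1), ht i⟩,
    fun h => ⟨fun i => (h i).1, fun i => (h i).2.2⟩⟩

theorem abs_cycleCountProd_five_sub_le {F : Type} [Field F] [Fintype F] [DecidableEq F] {d : ℕ}
    {t : F} (ht : t ≠ 0) (E : Finset (Fin d → F)) {μ : ℝ}
    (hμ : √((Fintype.card F : ℝ) ^ d / Fintype.card F) ≤ μ) (hE : μ * Fintype.card F ≤ #E) :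
    |(cycleCountProd F d 5 t E : ℝ) - (#E / Fintype.card F) ^ 5| ≤
      30 * μ * (#E / Fintype.card F) ^ 4 +
        μ ^ 3 * (μ * #E + (#E : ℝ) ^ 2 / Fintype.card F + (#E : ℝ) ^ 2 / Fintype.card F ^ 2) := by
  have hq : (0 : ℝ) < Fintype.card F := by exact_mod_cast Fintype.card_pos
  set M := centeredRestrictedDotMatrix t E
  have hM : ‖M‖ ≤ μ := by
    refine (norm_diagonal_indicator_mul_mul_le E _).trans ((norm_centeredDotMatrix_le ht).trans ?_)
    simpa using hμ
  have hMe : ‖M‖ ≤ (Fintype.card F : ℝ)⁻¹ *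
      ((E : Set (Fin d → F)).indicator 1 ⬝ᵥ (E : Set (Fin d → F)).indicator 1) := by
    rw [dotProduct_indicator_self, inv_mul_eq_div, le_div_iff₀ hq]
    exact (mul_le_mul_of_nonneg_right hM hq.le).trans hE
  have key := abs_trace_add_pow_five_sub_le (inv_nonneg.2 hq.le) _ M hMe
  rw [dotProduct_indicator_self, inv_mul_eq_div] at key
  rw [cycleCountProd_five_eq_trace, restrictedDotMatrix_eq]
  have hμ0 : 0 ≤ μ := (Real.sqrt_nonneg _).trans hμ
  refine key.trans (add_le_add ?_ ?_)
  · gcongr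
  calc |(M ^ 5).trace| ≤ ‖M‖ ^ 3 * ∑ x, ∑ y, M x y ^ 2 := abs_trace_pow_le M 3
    _ ≤ μ ^ 3 * (‖M‖ * (#E : ℝ) + (#E : ℝ) ^ 2 / Fintype.card F +
          (#E : ℝ) ^ 2 / Fintype.card F ^ 2) := by
        gcongr
        exact sum_sq_centeredRestrictedDotMatrix_le t E
    _ ≤ _ := by gcongr

theorem cycle_error_le {q n μ : ℝ} (hq : 1 ≤ q) (hμ : 0 ≤ μ) (hn : 0 < n) (h₁ : μ * q ≤ n)
    (h₂ : μ ^ 2 * q ^ 3 ≤ n ^ 2) :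
    30 * μ * (n / q) ^ 4 + μ ^ 3 * (μ * n + n ^ 2 / q + n ^ 2 / q ^ 2) ≤
      (n / q) ^ 5 * (8 * (μ ^ 2 * q ^ 2 * √q) / n ^ 2 + 32 * (μ * q) / n) := by
  have hq0 : 0 < q := by linarith
  obtain ⟨e, he, rfl⟩ : ∃ e, 0 < e ∧ n = e * q := ⟨n / q, by positivity, by field_simp⟩
  set s := √q
  have hsq : s ^ 2 = q := Real.sq_sqrt hq0.le
  have hμe : μ ≤ e := le_of_mul_le_mul_right h₁ hq0
  have hμ2 : μ ^ 2 * q ≤ e ^ 2 :=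
    le_of_mul_le_mul_right (by nlinarith : μ ^ 2 * q * q ^ 2 ≤ e ^ 2 * q ^ 2) (by positivity)
  have hμ3 : μ ^ 3 * q ≤ e ^ 3 := by nlinarith
  have hμs : μ * s ≤ e := by nlinarith [Real.sqrt_nonneg q]
  have hlhs : μ ^ 3 * (μ * (e * q) + (e * q) ^ 2 / q + (e * q) ^ 2 / q ^ 2) =
      μ * e * (μ ^ 3 * q) + μ ^ 3 * e ^ 2 * (q + 1) := by field_simp; ring
  have hrhs : (e * q / q) ^ 5 * (8 * (μ ^ 2 * q ^ 2 * s) / (e * q) ^ 2 + 32 * (μ * q) / (e * q)) =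
      8 * μ ^ 2 * s * e ^ 3 + 32 * μ * e ^ 4 := by field_simp
  have hfirst : μ * e * (μ ^ 3 * q) ≤ μ * e ^ 4 := by
    nlinarith [mul_le_mul_of_nonneg_left hμ3 (by positivity : 0 ≤ μ * e)]
  have hsecond : μ ^ 3 * e ^ 2 * (q + 1) ≤ 2 * μ ^ 2 * s * e ^ 3 := by
    have hqs : μ ^ 3 * e ^ 2 * q = μ ^ 2 * e ^ 2 * s * (μ * s) := by rw [← hsq]; ring
    nlinarith [mul_le_mul_of_nonneg_left hμs (by positivity : 0 ≤ μ ^ 2 * e ^ 2 * s),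
      mul_le_mul_of_nonneg_left hq (by positivity : 0 ≤ μ ^ 3 * e ^ 2)]
  rw [hlhs, hrhs, mul_div_cancel_right₀ e hq0.ne']
  have : 0 ≤ μ * e ^ 4 := by positivity
  have : 0 ≤ μ ^ 2 * s * e ^ 3 := by positivity
  linarith

theorem Real.sqrt_pow_div_self {q : ℝ} (hq : 0 < q) (d : ℕ) :
    √(q ^ d / q) = q ^ (((d : ℝ) - 1) / 2) := by
  rw [Real.sqrt_eq_rpow, ← Real.rpow_natCast, ← Real.rpow_sub_one hq.ne', ← Real.rpow_mul hq.le]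
  congr 1
  ring

theorem le_of_size_bound {q n μ : ℝ} (hq : 0 < q) (hn : 0 < n) (hμ : 0 ≤ μ)
    (h : 8 * (μ ^ 2 * q ^ 3) / n ^ 2 + 48 * (μ * q) / n ≤ 1) :
    μ * q ≤ n ∧ μ ^ 2 * q ^ 3 ≤ n ^ 2 := by
  have h₁ : 0 ≤ μ ^ 2 * q ^ 3 := by positivity
  have h₂ : 0 ≤ μ * q := by positivity
  have h₃ : 0 ≤ 8 * (μ ^ 2 * q ^ 3) / n ^ 2 := by positivity
  have h₄ : 0 ≤ 48 * (μ * q) / n := by positivity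
  constructor
  · have := (div_le_one hn).1 (by linarith : 48 * (μ * q) / n ≤ 1)
    linarith
  · have := (div_le_one (by positivity)).1 (by linarith : 8 * (μ ^ 2 * q ^ 3) / n ^ 2 ≤ 1)
    linarith

theorem cycle_count_prod_five_general (F : Type) [Field F] [Fintype F] [DecidableEq F]
    (d : ℕ) (t : F) (ht : t ≠ 0)
    (E : Finset (Fin d → F))
    (q : ℝ) (hq : q = (Fintype.card F : ℝ))
    (γ : ℝ)
    (hsize : 12 * q ^ γ + 8 * q ^ ((d : ℝ) + 2) / (E.card : ℝ) ^ 2 +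
      48 * q ^ (((d : ℝ) + 1) / 2) / (E.card : ℝ) ≤ 1) :
    |(cycleCountProd F d 5 t E : ℝ) - (E.card : ℝ) ^ 5 / q ^ 5| ≤
      (E.card : ℝ) ^ 5 / q ^ 5 *
        (12 * q ^ γ + 8 * q ^ ((2 * (d : ℝ) + 3) / 2) / (E.card : ℝ) ^ 2 +
          32 * q ^ (((d : ℝ) + 1) / 2) / (E.card : ℝ)) := by
  rcases (#E).eq_zero_or_pos with hE | hE
  · simp [cycleCountProd, card_eq_zero.mp hE]
  subst hq
  have hq1 : 1 ≤ (Fintype.card F : ℝ) := by exact_mod_cast Fintype.card_pos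
  have hq0 : 0 < (Fintype.card F : ℝ) := by linarith
  have hn : (0 : ℝ) < #E := by exact_mod_cast hE
  have hγ : 0 ≤ 12 * (Fintype.card F : ℝ) ^ γ := by positivity
  set q := (Fintype.card F : ℝ)
  set μ := q ^ (((d : ℝ) - 1) / 2)
  have hμq : q ^ (((d : ℝ) + 1) / 2) = μ * q := by
    rw [show ((d : ℝ) + 1) / 2 = ((d : ℝ) - 1) / 2 + 1 by ring, Real.rpow_add hq0, Real.rpow_one]
  have hμ₂ : q ^ ((d : ℝ) + 2) = μ ^ 2 * q ^ 3 := by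
    rw [show (d : ℝ) + 2 = ((d : ℝ) - 1) / 2 * 2 + 3 by ring, Real.rpow_add hq0,
      Real.rpow_mul hq0.le, Real.rpow_two, Real.rpow_ofNat]
  have hμ₃ : q ^ ((2 * (d : ℝ) + 3) / 2) = μ ^ 2 * q ^ 2 * √q := by
    rw [show (2 * (d : ℝ) + 3) / 2 = ((d : ℝ) - 1) / 2 * 2 + 2 + 1 / 2 by ring, Real.rpow_add hq0,
      Real.rpow_add hq0, Real.rpow_mul hq0.le, Real.sqrt_eq_rpow, Real.rpow_two, Real.rpow_ofNat]
  obtain ⟨h₁, h₂⟩ := le_of_size_bound (μ := μ) hq0 hn (by positivity)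
    (by rw [hμq, hμ₂] at hsize; linarith)
  rw [hμq, hμ₃, ← div_pow]
  calc _ ≤ _ := abs_cycleCountProd_five_sub_le ht E (Real.sqrt_pow_div_self hq0 d).le h₁
    _ ≤ _ := cycle_error_le hq1 (by positivity) hn h₁ h₂
    _ ≤ _ := by gcongr; exact le_add_of_nonneg_left hγ

theorem cycle_count_prod_five (F : Type) [Field F] [Fintype F] [DecidableEq F]
    (d : ℕ) (hd : 2 ≤ d) (t : F) (ht : t ≠ 0)
    (E : Finset (Fin d → F))
    (q : ℝ) (hq : q = (Fintype.card F : ℝ))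
    (γ : ℝ) (hγ : γ = if d = 2 then (-1 : ℝ) else -(((d : ℝ) - 2) / 2))
    (hsize : 12 * q ^ γ + 8 * q ^ ((d : ℝ) + 2) / (E.card : ℝ) ^ 2 +
      48 * q ^ (((d : ℝ) + 1) / 2) / (E.card : ℝ) ≤ 1) :
    |(cycleCountProd F d 5 t E : ℝ) - (E.card : ℝ) ^ 5 / q ^ 5| ≤
      (E.card : ℝ) ^ 5 / q ^ 5 *
        (12 * q ^ γ + 8 * q ^ ((2 * (d : ℝ) + 3) / 2) / (E.card : ℝ) ^ 2 +
          32 * q ^ (((d : ℝ) + 1) / 2) / (E.card : ℝ)) :=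
  cycle_count_prod_five_general F d t ht E q hq γ hsize
end

section
/- Let X = (|E| + q^{(d+1)/2})/q. Then for every integer k ≥ 1, P_k^prod(E) ≤ |E|·X^k. -/
/-!
Let `A g (x) = ∑_{x ⬝ y = t} g y` be the adjacency operator of the dot-product graph and
`T g = 1_E · A g`. The number of walks of length `k` in `E` is `∑ Tᵏ 1_E ≤ √|E| ‖Tᵏ 1_E‖₂`, so it
suffices that `‖T g‖₂ ≤ X ‖g‖₂` for nonnegative `g` supported on `E`.

Expanding the indicator of `x ⬝ y = t` in additive characters gives
`q ⟨h, A g⟩ = (∑ h)(∑ g) + ⟨h, q A g - ∑ g⟩` and, for `t ≠ 0`,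
`‖q A g - ∑ g‖₂² = q^d (q ‖g‖₂² - ∑_{w ≠ 0} ∑_y g y g (w y)) ≤ q^(d+1) ‖g‖₂²` when `g ≥ 0`.
Taking `h = T g` and applying Cauchy–Schwarz on the support `E` to both `∑ h` and `∑ g` yields
`q ‖T g‖₂² ≤ (|E| + q^((d+1)/2)) ‖T g‖₂ ‖g‖₂`.
-/

open Finset
open scoped Classical

/-- The number of paths of length `k` in the dot-product graph of `E`: tuples
`(x₀,…,x_k) ∈ E^{k+1}` with `x_{i-1} · x_i = t` for `i = 1,…,k`, where
`x·y = x₁y₁ + ⋯ + x_dy_d`. -/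
noncomputable def pathCountProd (F : Type) [Field F] [Fintype F] [DecidableEq F]
    (d k : ℕ) (t : F) (E : Finset (Fin d → F)) : ℕ :=
  (Finset.univ.filter (fun x : Fin (k + 1) → (Fin d → F) =>
    (∀ i, x i ∈ E) ∧ ∀ i : Fin k, ∑ j, x i.castSucc j * x i.succ j = t)).card

lemma sum_le_sqrt_card_mul_sqrt_sum_sq {α : Type*} [Fintype α] (s : Finset α) {f : α → ℝ}
    (hf : ∀ x ∉ s, f x = 0) :
    ∑ x, f x ≤ √(#s : ℝ) * √(∑ x, f x ^ 2) := by
  have h1 : ∑ x, f x = ∑ x ∈ s, f x :=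
    (sum_subset (subset_univ s) fun x _ hx => hf x hx).symm
  have h2 : ∑ x, f x ^ 2 = ∑ x ∈ s, f x ^ 2 :=
    (sum_subset (subset_univ s) fun x _ hx => by simp [hf x hx]).symm
  calc ∑ x, f x = ∑ x ∈ s, 1 * f x := by simp [h1]
    _ ≤ √(∑ x ∈ s, 1 ^ 2) * √(∑ x ∈ s, f x ^ 2) := Real.sum_mul_le_sqrt_mul_sqrt _ _ _
    _ = √(#s : ℝ) * √(∑ x, f x ^ 2) := by simp [h2]

section CharacterSums

variable {F ι : Type*} [Field F] [Fintype F] [Fintype ι] [DecidableEq ι] {ψ : AddChar F ℂ}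

lemma sum_units_eq_sum_sub_zero {M : Type*} [AddCommGroup M] (f : F → M) :
    ∑ u : Fˣ, f u = ∑ x, f x - f 0 := by
  rw [← sum_erase_add _ _ (mem_univ (0 : F)), add_sub_cancel_right]
  refine sum_nbij' Units.val (fun x => if hx : x = 0 then 1 else Units.mk0 x hx) ?_ ?_ ?_ ?_ ?_
    <;> intro x <;> simp_all

lemma sum_units_addChar_mul (hψ : ψ.IsPrimitive) (c : F) :
    ∑ u : Fˣ, ψ (u * c) = (if c = 0 then (Fintype.card F : ℂ) else 0) - 1 := by
  rw [sum_units_eq_sum_sub_zero (fun s => ψ (s * c)), AddChar.sum_mulShift c hψ]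
  simp

lemma sum_addChar_dotProduct (hψ : ψ.IsPrimitive) (a : ι → F) :
    ∑ x : ι → F, ψ (x ⬝ᵥ a) =
      if a = 0 then (Fintype.card F : ℂ) ^ Fintype.card ι else 0 := by
  split_ifs with ha
  · simp [ha]
  · obtain ⟨j, hj⟩ := Function.ne_iff.1 ha
    let φ : AddChar (ι → F) ℂ :=
      ψ.compAddMonoidHom (AddMonoidHom.mk' (· ⬝ᵥ a) fun x y => add_dotProduct x y a)
    refine AddChar.sum_eq_zero_of_ne_one (ψ := φ) ?_
    obtain ⟨c, hc⟩ := AddChar.ne_one_iff.1 (hψ hj)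
    refine AddChar.ne_one_iff.2 ⟨Pi.single j c, ?_⟩
    simpa [φ, single_dotProduct, mul_comm] using hc

variable (ψ) in
noncomputable def dotFourier (g : (ι → F) → ℝ) (z : ι → F) : ℂ :=
  ∑ y, g y * ψ (z ⬝ᵥ y)

lemma sum_dotFourier_smul_mul_conj (hψ : ψ.IsPrimitive) (g : (ι → F) → ℝ) (a : F) {b : F}
    (hb : b ≠ 0) :
    ∑ x, dotFourier ψ g (a • x) * starRingEnd ℂ (dotFourier ψ g (b • x)) =
      (Fintype.card F : ℂ) ^ Fintype.card ι * ∑ y, (g y * g ((b⁻¹ * a) • y) : ℝ) := by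
  have expand : ∀ x, dotFourier ψ g (a • x) * starRingEnd ℂ (dotFourier ψ g (b • x)) =
      ∑ y, ∑ y', (g y * g y' : ℂ) * ψ (x ⬝ᵥ (a • y - b • y')) := by
    intro x
    simp only [dotFourier, map_sum, map_mul, Complex.conj_ofReal, ← AddChar.map_neg_eq_conj,
      sum_mul_sum]
    refine sum_congr rfl fun y _ => sum_congr rfl fun y' _ => ?_
    rw [dotProduct_sub, dotProduct_smul, dotProduct_smul, smul_dotProduct, smul_dotProduct,
      sub_eq_add_neg, AddChar.map_add_eq_mul]
    ring
  have solve : ∀ y y' : ι → F, a • y - b • y' = 0 ↔ (b⁻¹ * a) • y = y' := by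
    intro y y'
    rw [sub_eq_zero, mul_smul, inv_smul_eq_iff₀ hb, eq_comm]
  calc ∑ x, dotFourier ψ g (a • x) * starRingEnd ℂ (dotFourier ψ g (b • x))
      = ∑ y, ∑ y', (g y * g y' : ℂ) * ∑ x : ι → F, ψ (x ⬝ᵥ (a • y - b • y')) := by
        simp_rw [expand, mul_sum]
        rw [sum_comm]
        exact sum_congr rfl fun y _ => sum_comm
    _ = _ := by
        simp_rw [sum_addChar_dotProduct hψ, solve, mul_ite, mul_zero, sum_ite_eq, mem_univ,
          if_true]
        push_cast
        rw [mul_sum]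
        exact sum_congr rfl fun y _ => by ring

end CharacterSums

section NeighborSum

variable {F ι : Type*} [Field F] [Fintype F] [Fintype ι] [DecidableEq ι] {ψ : AddChar F ℂ}

noncomputable def neighborSum (t : F) (g : (ι → F) → ℝ) (x : ι → F) : ℝ :=
  ∑ y with x ⬝ᵥ y = t, g y

lemma card_mul_neighborSum_sub_sum (hψ : ψ.IsPrimitive) (t : F) (g : (ι → F) → ℝ)
    (x : ι → F) :
    ((Fintype.card F * neighborSum t g x - ∑ y, g y : ℝ) : ℂ) =
      ∑ u : Fˣ, ψ (-(u * t)) * dotFourier ψ g ((u : F) • x) := by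
  have hchar : ∀ u : Fˣ, ∀ y, ψ (-(u * t)) * ψ (((u : F) • x) ⬝ᵥ y) = ψ (u * (x ⬝ᵥ y - t)) := by
    intro u y
    rw [← AddChar.map_add_eq_mul, smul_dotProduct, smul_eq_mul]
    ring_nf
  simp only [dotFourier, mul_sum, mul_left_comm _ (g _ : ℂ), hchar]
  rw [sum_comm]
  simp only [← mul_sum, sum_units_addChar_mul hψ, sub_eq_zero, neighborSum, sum_filter]
  push_cast
  rw [mul_sum, ← sum_sub_distrib]
  exact sum_congr rfl fun y _ => by split_ifs <;> push_cast <;> ring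

lemma sum_sq_card_mul_neighborSum_sub_sum {t : F} (ht : t ≠ 0) (g : (ι → F) → ℝ) :
    ∑ x, (Fintype.card F * neighborSum t g x - ∑ y, g y) ^ 2 =
      (Fintype.card F : ℝ) ^ Fintype.card ι *
        (Fintype.card F * ∑ y, g y ^ 2 - ∑ w : Fˣ, ∑ y, g y * g ((w : F) • y)) := by
  set ψ := AddChar.FiniteField.primitiveChar_to_Complex F
  have hψ : ψ.IsPrimitive := AddChar.FiniteField.primitiveChar_to_Complex_isPrimitive F
  set C : Fˣ → ℝ := fun w => ∑ y, g y * g ((w : F) • y)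
  have hunits : ∀ w : Fˣ, ∑ u : Fˣ, ψ (u * ((1 - w) * t)) =
      (if w = 1 then (Fintype.card F : ℂ) else 0) - 1 := by
    intro w
    rw [sum_units_addChar_mul hψ]
    simp only [mul_eq_zero, or_iff_left ht, sub_eq_zero, eq_comm (a := (1 : F)),
      Units.val_eq_one]
  apply Complex.ofReal_injective
  calc ((∑ x, (Fintype.card F * neighborSum t g x - ∑ y, g y) ^ 2 : ℝ) : ℂ)
      = ∑ u : Fˣ, ∑ u' : Fˣ, ψ (-(u * t)) * ψ (u' * t) *
          ∑ x, dotFourier ψ g ((u : F) • x) * starRingEnd ℂ (dotFourier ψ g ((u' : F) • x)) := by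
        have hsq : ∀ r : ℝ, ((r ^ 2 : ℝ) : ℂ) = r * starRingEnd ℂ r := fun r => by
          rw [Complex.conj_ofReal]; push_cast; ring
        simp only [Complex.ofReal_sum, hsq, card_mul_neighborSum_sub_sum hψ, map_sum, map_mul,
          ← AddChar.map_neg_eq_conj, neg_neg, sum_mul_sum]
        rw [sum_comm]
        refine sum_congr rfl fun u _ => ?_
        rw [sum_comm]
        refine sum_congr rfl fun u' _ => ?_
        rw [mul_sum]
        exact sum_congr rfl fun x _ => by ring
    _ = ∑ u' : Fˣ, ∑ w : Fˣ,
          ψ (u' * ((1 - w) * t)) * ((Fintype.card F : ℂ) ^ Fintype.card ι * C w) := by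
        rw [sum_comm]
        refine sum_congr rfl fun u' _ => ?_
        rw [← Equiv.sum_comp (Equiv.mulLeft u')]
        refine sum_congr rfl fun w _ => ?_
        rw [sum_dotFourier_smul_mul_conj hψ g _ u'.ne_zero, ← AddChar.map_add_eq_mul,
          Equiv.coe_mulLeft, Units.val_mul, inv_mul_cancel_left₀ u'.ne_zero,
          show -(u' * w * t) + u' * t = u' * ((1 - w) * t) by ring]
    _ = _ := by
        rw [sum_comm]
        simp only [← sum_mul, hunits]
        simp only [sub_mul, ite_mul, zero_mul, one_mul, sum_sub_distrib,
          sum_ite_eq', mem_univ, if_true, C, Units.val_one, one_smul]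
        push_cast
        simp only [← mul_sum, sq]
        ring

lemma sum_sq_card_mul_neighborSum_sub_sum_le {t : F} (ht : t ≠ 0) {g : (ι → F) → ℝ}
    (hg : 0 ≤ g) :
    ∑ x, (Fintype.card F * neighborSum t g x - ∑ y, g y) ^ 2 ≤
      (Fintype.card F : ℝ) ^ (Fintype.card ι + 1) * ∑ y, g y ^ 2 := by
  have hcorr : 0 ≤ ∑ w : Fˣ, ∑ y, g y * g ((w : F) • y) :=
    sum_nonneg fun w _ => sum_nonneg fun y _ => mul_nonneg (hg y) (hg _)
  rw [sum_sq_card_mul_neighborSum_sub_sum ht, pow_succ, mul_assoc]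
  gcongr
  linarith

lemma card_mul_sum_mul_neighborSum_le {t : F} (ht : t ≠ 0) (h : (ι → F) → ℝ)
    {g : (ι → F) → ℝ} (hg : 0 ≤ g) :
    Fintype.card F * ∑ x, h x * neighborSum t g x ≤
      (∑ x, h x) * (∑ y, g y) +
        √((Fintype.card F : ℝ) ^ (Fintype.card ι + 1)) *
          (√(∑ x, h x ^ 2) * √(∑ y, g y ^ 2)) := by
  have hdev : Fintype.card F * ∑ x, h x * neighborSum t g x - (∑ x, h x) * ∑ y, g y =
      ∑ x, h x * (Fintype.card F * neighborSum t g x - ∑ y, g y) := by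
    rw [mul_sum, sum_mul, ← sum_sub_distrib]
    exact sum_congr rfl fun x _ => by ring
  have hdev_le := (Real.sum_mul_le_sqrt_mul_sqrt univ h _).trans
    (mul_le_mul_of_nonneg_left
      (Real.sqrt_le_sqrt (sum_sq_card_mul_neighborSum_sub_sum_le ht hg)) (Real.sqrt_nonneg _))
  rw [← hdev, Real.sqrt_mul (by positivity)] at hdev_le
  linarith

lemma sqrt_sum_sq_indicator_neighborSum_le {t : F} (ht : t ≠ 0) (E : Finset (ι → F))
    {g : (ι → F) → ℝ} (hg : 0 ≤ g) (hgE : ∀ x ∉ E, g x = 0) :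
    √(∑ x, (E : Set (ι → F)).indicator (neighborSum t g) x ^ 2) ≤
      (#E + √((Fintype.card F : ℝ) ^ (Fintype.card ι + 1))) / Fintype.card F *
        √(∑ y, g y ^ 2) := by
  set f := (E : Set (ι → F)).indicator (neighborSum t g)
  have hq : (0 : ℝ) < Fintype.card F := Nat.cast_pos.2 Fintype.card_pos
  have hfE : ∀ x ∉ E, f x = 0 := fun x hx => Set.indicator_of_notMem (by simpa using hx) _
  have hsq : ∑ x, f x ^ 2 = ∑ x, f x * neighborSum t g x := by
    refine sum_congr rfl fun x _ => ?_
    by_cases hx : x ∈ E <;> simp [f, hx, sq]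
  have hbil := card_mul_sum_mul_neighborSum_le ht f hg
  have hf_sum := sum_le_sqrt_card_mul_sqrt_sum_sq E hfE
  have hg_sum := sum_le_sqrt_card_mul_sqrt_sum_sq E hgE
  rw [← hsq] at hbil
  have ha2 : √(∑ x, f x ^ 2) ^ 2 = ∑ x, f x ^ 2 :=
    Real.sq_sqrt (sum_nonneg fun x _ => sq_nonneg _)
  set a := √(∑ x, f x ^ 2)
  set b := √(∑ y, g y ^ 2)
  rw [← ha2] at hbil
  have hprod : (∑ x, f x) * (∑ y, g y) ≤ #E * (a * b) :=
    calc (∑ x, f x) * (∑ y, g y) ≤ (√(#E : ℝ) * a) * (√(#E : ℝ) * b) :=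
          mul_le_mul hf_sum hg_sum (sum_nonneg fun y _ => hg y) (by positivity)
      _ = #E * (a * b) := by
          rw [mul_mul_mul_comm, Real.mul_self_sqrt (Nat.cast_nonneg _)]
  rcases (Real.sqrt_nonneg _ : 0 ≤ a).eq_or_lt with ha | ha
  · rw [show a = 0 from ha.symm]
    positivity
  · have key : Fintype.card F * a * a ≤
        (#E + √((Fintype.card F : ℝ) ^ (Fintype.card ι + 1))) * b * a := by
      linarith
    rw [div_mul_eq_mul_div, le_div_iff₀ hq, mul_comm a]
    exact le_of_mul_le_mul_right key ha

end NeighborSum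

section DotPaths

variable {F ι : Type*} [Field F] [Fintype ι] (E : Finset (ι → F)) (t : F)

def IsDotPath {k : ℕ} (x : Fin (k + 1) → ι → F) : Prop :=
  (∀ i, x i ∈ E) ∧ ∀ i : Fin k, x i.castSucc ⬝ᵥ x i.succ = t

lemma isDotPath_cons {k : ℕ} (v : ι → F) (x : Fin (k + 1) → ι → F) :
    IsDotPath E t (Fin.cons v x : Fin (k + 2) → ι → F) ↔
      v ∈ E ∧ v ⬝ᵥ x 0 = t ∧ IsDotPath E t x := by
  simp only [IsDotPath, Fin.forall_fin_succ (n := k + 1), Fin.forall_fin_succ (n := k),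
    Fin.cons_zero, Fin.cons_succ, Fin.castSucc_zero, ← Fin.succ_castSucc]
  tauto

variable [Fintype F] [DecidableEq ι]

noncomputable def pathCountFrom (k : ℕ) (v : ι → F) : ℕ :=
  #{x : Fin (k + 1) → ι → F | x 0 = v ∧ IsDotPath E t x}

lemma pathCountFrom_eq_zero_of_notMem {k : ℕ} {v : ι → F} (hv : v ∉ E) :
    pathCountFrom E t k v = 0 := by
  refine card_eq_zero.2 (filter_eq_empty_iff.2 fun x _ hx => hv ?_)
  exact hx.1 ▸ hx.2.1 0

lemma pathCountFrom_zero (v : ι → F) : pathCountFrom E t 0 v = if v ∈ E then 1 else 0 := by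
  split_ifs with hv
  · refine card_eq_one.2 ⟨fun _ => v, ?_⟩
    ext x
    simp only [IsDotPath, mem_filter, mem_univ, true_and, mem_singleton, IsEmpty.forall_iff,
      and_true]
    constructor
    · rintro ⟨rfl, -⟩
      exact funext fun i => by rw [Fin.eq_zero i]
    · rintro rfl
      exact ⟨rfl, fun _ => hv⟩
  · exact pathCountFrom_eq_zero_of_notMem E t hv

lemma pathCountFrom_succ (k : ℕ) (v : ι → F) :
    (pathCountFrom E t (k + 1) v : ℝ) =
      (E : Set (ι → F)).indicator (neighborSum t fun u => (pathCountFrom E t k u : ℝ)) v := by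
  by_cases hv : v ∈ E
  swap
  · simp [pathCountFrom_eq_zero_of_notMem E t hv, hv]
  have htail : pathCountFrom E t (k + 1) v =
      #{y : Fin (k + 1) → ι → F | v ⬝ᵥ y 0 = t ∧ IsDotPath E t y} := by
    refine card_nbij' Fin.tail (fun y => (Fin.cons v y : Fin (k + 2) → ι → F)) ?_ ?_ ?_ ?_
    · intro x hx
      simp only [mem_coe, mem_filter, mem_univ, true_and] at hx ⊢
      obtain ⟨rfl, hx⟩ := hx
      rw [← Fin.cons_self_tail x, isDotPath_cons] at hx
      exact hx.2
    · intro y hy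
      simp only [mem_coe, mem_filter, mem_univ, true_and] at hy ⊢
      exact ⟨Fin.cons_zero _ _, (isDotPath_cons E t v y).2 ⟨hv, hy⟩⟩
    · intro x hx
      simp only [mem_coe, mem_filter, mem_univ, true_and] at hx
      rw [← hx.1]
      exact Fin.cons_self_tail x
    · intro y _
      exact Fin.tail_cons _ _
  rw [Set.indicator_of_mem (by simpa using hv), neighborSum, htail,
    card_eq_sum_card_fiberwise (f := (· 0)) (t := {u | v ⬝ᵥ u = t}) fun y hy => by
      simpa using (mem_filter.1 hy).2.1]
  push_cast
  refine sum_congr rfl fun u hu => ?_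
  rw [mem_filter] at hu
  simp only [pathCountFrom, filter_filter, Nat.cast_inj]
  congr 1
  refine filter_congr fun y _ => ?_
  constructor
  · rintro ⟨⟨-, hy⟩, rfl⟩
    exact ⟨rfl, hy⟩
  · rintro ⟨rfl, hy⟩
    exact ⟨⟨hu.2, hy⟩, rfl⟩

lemma sum_pathCountFrom (k : ℕ) :
    ∑ v, pathCountFrom E t k v = #{x : Fin (k + 1) → ι → F | IsDotPath E t x} := by
  rw [card_eq_sum_card_fiberwise (f := (· 0)) (t := univ) fun _ _ => mem_univ _]
  simp only [pathCountFrom, filter_filter, and_comm]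

lemma sqrt_sum_sq_pathCountFrom_le (ht : t ≠ 0) (k : ℕ) :
    √(∑ v, (pathCountFrom E t k v : ℝ) ^ 2) ≤
      ((#E + √((Fintype.card F : ℝ) ^ (Fintype.card ι + 1))) / Fintype.card F) ^ k *
        √(#E : ℝ) := by
  set X := (#E + √((Fintype.card F : ℝ) ^ (Fintype.card ι + 1))) / Fintype.card F
  have hX : 0 ≤ X := by positivity
  induction k with
  | zero => simp [pathCountFrom_zero]
  | succ k ih =>
    simp_rw [pathCountFrom_succ]
    calc _ ≤ X * √(∑ v, (pathCountFrom E t k v : ℝ) ^ 2) :=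
          sqrt_sum_sq_indicator_neighborSum_le ht E (fun u => Nat.cast_nonneg _)
            fun u hu => by simp [pathCountFrom_eq_zero_of_notMem E t hu]
      _ ≤ X * (X ^ k * √(#E : ℝ)) := by gcongr
      _ = X ^ (k + 1) * √(#E : ℝ) := by ring

theorem card_isDotPath_le (ht : t ≠ 0) (k : ℕ) :
    (#{x : Fin (k + 1) → ι → F | IsDotPath E t x} : ℝ) ≤
      #E * ((#E + √((Fintype.card F : ℝ) ^ (Fintype.card ι + 1))) / Fintype.card F) ^ k := by
  rw [← sum_pathCountFrom, Nat.cast_sum]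
  calc ∑ v, (pathCountFrom E t k v : ℝ)
      ≤ √(#E : ℝ) * √(∑ v, (pathCountFrom E t k v : ℝ) ^ 2) :=
        sum_le_sqrt_card_mul_sqrt_sum_sq E fun v hv => by
          simp [pathCountFrom_eq_zero_of_notMem E t hv]
    _ ≤ √(#E : ℝ) * (((#E + √((Fintype.card F : ℝ) ^ (Fintype.card ι + 1))) /
          Fintype.card F) ^ k * √(#E : ℝ)) := by
        gcongr
        exact sqrt_sum_sq_pathCountFrom_le E t ht k
    _ = _ := by
        rw [mul_left_comm, Real.mul_self_sqrt (Nat.cast_nonneg _), mul_comm]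

end DotPaths

theorem path_count_prod_upper_general (F : Type) [Field F] [Fintype F] [DecidableEq F]
    (d : ℕ) (t : F) (ht : t ≠ 0) (E : Finset (Fin d → F))
    (q : ℝ) (hq : q = (Fintype.card F : ℝ))
    (X : ℝ) (hX : X = ((E.card : ℝ) + q ^ (((d : ℝ) + 1) / 2)) / q)
    (k : ℕ) :
    (pathCountProd F d k t E : ℝ) ≤ (E.card : ℝ) * X ^ k := by
  have hpow : q ^ (((d : ℝ) + 1) / 2) = √(q ^ (d + 1)) := by
    rw [Real.sqrt_eq_rpow, ← Real.rpow_natCast, ← Real.rpow_mul (hq ▸ Nat.cast_nonneg _)]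
    push_cast
    ring_nf
  have hcount :
      pathCountProd F d k t E = #{x : Fin (k + 1) → Fin d → F | IsDotPath E t x} := by
    unfold pathCountProd IsDotPath dotProduct
    congr
  have hbound := card_isDotPath_le E t ht k
  rw [Fintype.card_fin] at hbound
  rw [hX, hpow, hq, hcount]
  exact hbound

theorem path_count_prod_upper (F : Type) [Field F] [Fintype F] [DecidableEq F]
    (d : ℕ) (hd : 2 ≤ d) (t : F) (ht : t ≠ 0) (E : Finset (Fin d → F))
    (q : ℝ) (hq : q = (Fintype.card F : ℝ))
    (X : ℝ) (hX : X = ((E.card : ℝ) + q ^ (((d : ℝ) + 1) / 2)) / q)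
    (k : ℕ) (hk : 1 ≤ k) :
    (pathCountProd F d k t E : ℝ) ≤ (E.card : ℝ) * X ^ k :=
  path_count_prod_upper_general F d t ht E q hq X hX k
end

section
/- Let f, g : F_q^d × F_q^d → [0,∞) be nonnegative functions. Then |Σ_{x,y,z,w : x·z = t, y·w = t} f(x,y)g(z,w) − q^{-2}·||f||₁·||g||₁| ≤ 2q^{d-1}·||f||₂·||g||₂ + q^{(d-3)/2}·(||F||₂·||G||₂ + ||F'||₂·||G'||₂). -/
/-!
Write `𝟙[x·z = t] = K(x, z) + q⁻¹` with `K = centeredIncidence t`. Expanding the product of the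
two indicators, the main term `q⁻² ‖f‖₁ ‖g‖₁` cancels and what is left is
`⟨f, (K ⊗ K) g⟩ + q⁻¹ ⟨F, K G⟩ + q⁻¹ ⟨F', K G'⟩`. So everything follows from the operator bound
`‖K‖ ≤ q^((d-1)/2)` on `ℓ²(F_q^d)`, whose square bounds `K ⊗ K`.

For the operator bound: as `t ≠ 0`, column `0` of `K` is the constant `-q⁻¹`, while every other
column sums to zero, so column `0` splits off orthogonally. For `z, z' ≠ 0` the Gram entry
`∑ₓ K(x, z) K(x, z')` equals `q^(d-1) 𝟙[z = z'] - q^(d-2) 𝟙[z, z' span the same line]`, and the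
second term is a positive semidefinite form: it is a sum of squares over the lines.
-/

open Finset Matrix
open scoped Kronecker

section Counting

variable {F : Type*} [Field F] [Fintype F]

theorem LinearMap.card_filter_apply_eq_of_surjective {V W : Type*} [AddCommGroup V] [Module F V]
    [Fintype V] [AddCommGroup W] [Module F W] [DecidableEq W] (L : V →ₗ[F] W)
    (hL : Function.Surjective L) (w : W) :
    #{v | L v = w} = Fintype.card F ^ (Module.finrank F V - Module.finrank F W) := by
  classical
  obtain ⟨v₀, rfl⟩ := hL w
  have hker : #{v | L v = L v₀} = Fintype.card (LinearMap.ker L) := by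
    rw [← Fintype.card_subtype]
    exact Fintype.card_congr
      { toFun := fun v => ⟨v - v₀, by simp [v.2]⟩
        invFun := fun k => ⟨k + v₀, by simp⟩
        left_inv := fun v => by simp
        right_inv := fun k => by simp }
  have hrank := L.finrank_range_add_finrank_ker
  rw [LinearMap.range_eq_top.mpr hL, finrank_top] at hrank
  rw [hker, Module.card_eq_pow_finrank (K := F), ← hrank, Nat.add_sub_cancel_left]

variable [DecidableEq F] {ι : Type*} [Fintype ι] [DecidableEq ι]

theorem card_filter_forall_dotProduct_eq {κ : Type*} [Fintype κ] {v : κ → ι → F}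
    (hv : LinearIndependent F v) (s : κ → F) :
    #{x : ι → F | ∀ i, x ⬝ᵥ v i = s i}
      = Fintype.card F ^ (Fintype.card ι - Fintype.card κ) := by
  let L := (Matrix.of v).mulVecLin
  have hL : Function.Surjective L := by
    rw [← LinearMap.range_eq_top]
    apply Submodule.eq_top_of_finrank_eq
    rw [Module.finrank_fintype_fun_eq_card]
    exact LinearIndependent.rank_matrix (M := Matrix.of v) hv
  have hfilter : ∀ x : ι → F, (∀ i, x ⬝ᵥ v i = s i) ↔ L x = s := fun x => by
    simp [L, funext_iff, dotProduct_comm x, mulVec]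
  simp_rw [hfilter]
  rw [L.card_filter_apply_eq_of_surjective hL, Module.finrank_fintype_fun_eq_card,
    Module.finrank_fintype_fun_eq_card]

theorem card_filter_dotProduct_eq {z : ι → F} (hz : z ≠ 0) (s : F) :
    #{x : ι → F | x ⬝ᵥ z = s} = Fintype.card F ^ (Fintype.card ι - 1) := by
  simpa using card_filter_forall_dotProduct_eq (v := fun _ : Unit => z)
    (linearIndependent_unique_iff.mpr hz) (fun _ => s)

theorem card_filter_dotProduct_eq_and_dotProduct_eq {z z' : ι → F}
    (h : LinearIndependent F ![z, z']) (s s' : F) :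
    #{x : ι → F | x ⬝ᵥ z = s ∧ x ⬝ᵥ z' = s'} = Fintype.card F ^ (Fintype.card ι - 2) := by
  simpa [Fin.forall_fin_two] using card_filter_forall_dotProduct_eq h ![s, s']

open Classical in
theorem card_filter_dotProduct_eq_and_dotProduct_eq_of_ne_zero {t : F} (ht : t ≠ 0)
    {z z' : ι → F} (hz : z ≠ 0) (hz' : z' ≠ 0) :
    #{x : ι → F | x ⬝ᵥ z = t ∧ x ⬝ᵥ z' = t}
      = (if z = z' then Fintype.card F ^ (Fintype.card ι - 1) else 0)
        + (if (F ∙ z) = (F ∙ z') then 0 else Fintype.card F ^ (Fintype.card ι - 2)) := by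
  by_cases hzz : z = z'
  · subst hzz
    simpa using card_filter_dotProduct_eq hz t
  by_cases hline : (F ∙ z) = (F ∙ z')
  · obtain ⟨u, rfl⟩ := Submodule.span_singleton_eq_span_singleton.mp hline
    have hu : (u : F) ≠ 1 := fun h => hzz (by simp [Units.smul_def, h])
    simp only [hzz, hline, if_false, if_true, add_zero, card_eq_zero, filter_eq_empty_iff]
    rintro x - ⟨hx, hux⟩
    rw [Units.smul_def, dotProduct_smul, hx, smul_eq_mul] at hux
    exact hu (mul_right_cancel₀ ht (hux.trans (one_mul t).symm))
  · have hindep : LinearIndependent F ![z, z'] := by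
      refine (LinearIndependent.pair_iff' hz).mpr fun a ha => hline ?_
      have ha0 : a ≠ 0 := by rintro rfl; exact hz' (by simp [← ha])
      exact Submodule.span_singleton_eq_span_singleton.mpr ⟨Units.mk0 a ha0, ha⟩
    simp [hzz, hline, card_filter_dotProduct_eq_and_dotProduct_eq hindep]

end Counting

section Quadratic

variable {R α β α' β' : Type*}

theorem sum_sum_ite_apply_eq_mul_nonneg {κ : Type*} [CommRing R] [LinearOrder R]
    [IsStrictOrderedRing R] [DecidableEq κ] (s : Finset α) (r : α → κ) (b : α → R) :
    0 ≤ ∑ i ∈ s, ∑ j ∈ s, if r i = r j then b i * b j else 0 := by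
  have hfiber : ∑ i ∈ s, ∑ j ∈ s, (if r i = r j then b i * b j else 0)
      = ∑ k ∈ s.image r, (∑ i ∈ s with r i = k, b i) ^ 2 := by
    rw [← sum_fiberwise_of_maps_to (fun i hi => mem_image_of_mem r hi)]
    refine sum_congr rfl fun k _ => ?_
    rw [sq, sum_mul]
    refine sum_congr rfl fun i hi => ?_
    rw [(mem_filter.mp hi).2.symm, mul_sum, sum_filter]
    simp only [eq_comm (a := r i)]
  rw [hfiber]
  positivity

theorem sum_sq_sum_mul_eq [CommSemiring R] [Fintype α] (s : Finset β) (M : Matrix α β R)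
    (b : β → R) :
    ∑ x, (∑ z ∈ s, M x z * b z) ^ 2
      = ∑ z ∈ s, ∑ z' ∈ s, b z * b z' * ∑ x, M x z * M x z' := by
  simp_rw [sq, sum_mul_sum, mul_sum]
  rw [sum_comm]
  refine sum_congr rfl fun z _ => ?_
  rw [sum_comm]
  exact sum_congr rfl fun z' _ => sum_congr rfl fun x _ => by ring

variable [CommSemiring R] [Fintype α] [Fintype α'] [Fintype β] [Fintype β']

theorem dotProduct_kronecker_mulVec (A : Matrix α β R) (B : Matrix α' β' R)
    (f : α × α' → R) (g : β × β' → R) :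
    f ⬝ᵥ ((A ⊗ₖ B) *ᵥ g) = ∑ x, ∑ y, ∑ z, ∑ w, f (x, y) * g (z, w) * (A x z * B y w) := by
  simp only [dotProduct, mulVec, Fintype.sum_prod_type, kroneckerMap_apply, mul_sum]
  exact sum_congr rfl fun x _ => sum_congr rfl fun y _ => sum_congr rfl fun z _ =>
    sum_congr rfl fun w _ => by ring

theorem sum_dotProduct_mulVec_sum_left (A : Matrix α β R) (f : α × α' → R) (g : β × β' → R) :
    (fun x => ∑ y, f (x, y)) ⬝ᵥ (A *ᵥ fun z => ∑ w, g (z, w))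
      = ∑ x, ∑ y, ∑ z, ∑ w, f (x, y) * g (z, w) * A x z := by
  refine sum_congr rfl fun x _ => ?_
  rw [mulVec, dotProduct, sum_mul_sum]
  refine sum_congr rfl fun y _ => sum_congr rfl fun z _ => ?_
  rw [mul_sum, mul_sum]
  exact sum_congr rfl fun w _ => by ring

theorem sum_dotProduct_mulVec_sum_right (B : Matrix α' β' R) (f : α × α' → R)
    (g : β × β' → R) :
    (fun y => ∑ x, f (x, y)) ⬝ᵥ (B *ᵥ fun w => ∑ z, g (z, w))
      = ∑ x, ∑ y, ∑ z, ∑ w, f (x, y) * g (z, w) * B y w := by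
  rw [sum_comm]
  refine sum_congr rfl fun y _ => ?_
  rw [mulVec, dotProduct, sum_mul_sum]
  refine sum_congr rfl fun x _ => ?_
  rw [sum_comm]
  refine sum_congr rfl fun w _ => ?_
  rw [mul_sum, mul_sum]
  exact sum_congr rfl fun z _ => by ring

theorem sum_mul_mul_add_mul_add (A : Matrix α β R) (B : Matrix α' β' R) (c : R)
    (f : α × α' → R) (g : β × β' → R) :
    ∑ x, ∑ y, ∑ z, ∑ w, f (x, y) * g (z, w) * ((A x z + c) * (B y w + c))
      = f ⬝ᵥ ((A ⊗ₖ B) *ᵥ g)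
        + c * ((fun x => ∑ y, f (x, y)) ⬝ᵥ (A *ᵥ fun z => ∑ w, g (z, w)))
        + c * ((fun y => ∑ x, f (x, y)) ⬝ᵥ (B *ᵥ fun w => ∑ z, g (z, w)))
        + c ^ 2 * ((∑ x, ∑ y, f (x, y)) * ∑ z, ∑ w, g (z, w)) := by
  have hprod : (∑ x, ∑ y, f (x, y)) * ∑ z, ∑ w, g (z, w)
      = ∑ x, ∑ y, ∑ z, ∑ w, f (x, y) * g (z, w) := by
    simp_rw [sum_mul, mul_sum]
  rw [dotProduct_kronecker_mulVec, sum_dotProduct_mulVec_sum_left,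
    sum_dotProduct_mulVec_sum_right, hprod]
  simp only [mul_sum, ← sum_add_distrib]
  exact sum_congr rfl fun x _ => sum_congr rfl fun y _ => sum_congr rfl fun z _ =>
    sum_congr rfl fun w _ => by ring

end Quadratic

def L2OpNormLE {α β : Type*} [Fintype α] [Fintype β] (M : Matrix α β ℝ) (C : ℝ) : Prop :=
  ∀ v : β → ℝ, ∑ a, (M *ᵥ v) a ^ 2 ≤ C ^ 2 * ∑ b, v b ^ 2

namespace L2OpNormLE

variable {α β α' β' : Type*} [Fintype α] [Fintype β] [Fintype α'] [Fintype β']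

theorem abs_dotProduct_mulVec_le {M : Matrix α β ℝ} {C : ℝ} (hM : L2OpNormLE M C)
    (hC : 0 ≤ C) (u : α → ℝ) (v : β → ℝ) :
    |u ⬝ᵥ (M *ᵥ v)| ≤ C * √(∑ a, u a ^ 2) * √(∑ b, v b ^ 2) := by
  calc |u ⬝ᵥ (M *ᵥ v)|
      ≤ √(∑ a, u a ^ 2) * √(∑ a, (M *ᵥ v) a ^ 2) := by
        rw [← Real.sqrt_mul (by positivity)]
        exact Real.abs_le_sqrt (sum_mul_sq_le_sq_mul_sq _ _ _)
    _ ≤ √(∑ a, u a ^ 2) * √(C ^ 2 * ∑ b, v b ^ 2) := by gcongr; exact hM v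
    _ = C * √(∑ a, u a ^ 2) * √(∑ b, v b ^ 2) := by
        rw [Real.sqrt_mul' _ (by positivity), Real.sqrt_sq hC]; ring

theorem kronecker {M : Matrix α β ℝ} {N : Matrix α' β' ℝ} {C C' : ℝ}
    (hM : L2OpNormLE M C) (hN : L2OpNormLE N C') : L2OpNormLE (M ⊗ₖ N) (C * C') := by
  intro v
  set h : β → α' → ℝ := fun b a' => (N *ᵥ fun b' => v (b, b')) a'
  have hmul : ∀ a a', ((M ⊗ₖ N) *ᵥ v) (a, a') = (M *ᵥ fun b => h b a') a := fun a a' => by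
    simp only [h, mulVec, dotProduct, kroneckerMap_apply, Fintype.sum_prod_type, mul_sum]
    exact sum_congr rfl fun b _ => sum_congr rfl fun b' _ => by ring
  calc ∑ p, ((M ⊗ₖ N) *ᵥ v) p ^ 2
      = ∑ a', ∑ a, (M *ᵥ fun b => h b a') a ^ 2 := by
        rw [Fintype.sum_prod_type, sum_comm]; simp only [hmul]
    _ ≤ ∑ a', C ^ 2 * ∑ b, h b a' ^ 2 := sum_le_sum fun a' _ => hM _
    _ = C ^ 2 * ∑ b, ∑ a', (N *ᵥ fun b' => v (b, b')) a' ^ 2 := by rw [← mul_sum, sum_comm]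
    _ ≤ C ^ 2 * ∑ b, C' ^ 2 * ∑ b', v (b, b') ^ 2 := by gcongr with b; exact hN _
    _ = (C * C') ^ 2 * ∑ p, v p ^ 2 := by rw [Fintype.sum_prod_type, ← mul_sum]; ring

end L2OpNormLE

section Kernel

variable {F ι : Type*} [Field F] [Fintype F] [DecidableEq F] [Fintype ι]

noncomputable def centeredIncidence (t : F) : Matrix (ι → F) (ι → F) ℝ :=
  Matrix.of fun x z => (if x ⬝ᵥ z = t then 1 else 0) - (Fintype.card F : ℝ)⁻¹

variable {t : F}

theorem centeredIncidence_apply_zero_right (ht : t ≠ 0) (x : ι → F) :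
    centeredIncidence t x 0 = -(Fintype.card F : ℝ)⁻¹ := by
  simp [centeredIncidence, ht.symm]

theorem centeredIncidence_add_inv_card (t : F) (x z : ι → F) :
    centeredIncidence t x z + (Fintype.card F : ℝ)⁻¹ = if x ⬝ᵥ z = t then 1 else 0 := by
  rw [centeredIncidence, of_apply, sub_add_cancel]

variable [DecidableEq ι]

theorem sum_centeredIncidence_of_ne_zero {z : ι → F} (hz : z ≠ 0) :
    ∑ x, centeredIncidence t x z = 0 := by
  obtain ⟨i, -⟩ := Function.ne_iff.mp hz
  have hn : 1 ≤ Fintype.card ι := Fintype.card_pos_iff.mpr ⟨i⟩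
  have hq : (Fintype.card F : ℝ) ≠ 0 := by positivity
  simp [centeredIncidence, sum_sub_distrib, sum_boole, card_filter_dotProduct_eq hz,
    pow_sub₀ _ hq hn]

theorem sum_centeredIncidence_mul_centeredIncidence (t : F) (z z' : ι → F) :
    ∑ x, centeredIncidence t x z * centeredIncidence t x z'
      = #{x : ι → F | x ⬝ᵥ z = t ∧ x ⬝ᵥ z' = t}
        - (Fintype.card F : ℝ)⁻¹ * (#{x : ι → F | x ⬝ᵥ z = t} + #{x : ι → F | x ⬝ᵥ z' = t})
        + (Fintype.card F : ℝ) ^ Fintype.card ι * (Fintype.card F : ℝ)⁻¹ ^ 2 := by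
  have hpoint : ∀ x : ι → F, centeredIncidence t x z * centeredIncidence t x z'
      = (if x ⬝ᵥ z = t then 1 else 0) * (if x ⬝ᵥ z' = t then 1 else 0)
        - (Fintype.card F : ℝ)⁻¹
          * ((if x ⬝ᵥ z = t then 1 else 0) + (if x ⬝ᵥ z' = t then 1 else 0))
        + (Fintype.card F : ℝ)⁻¹ ^ 2 := fun x => by
    simp only [centeredIncidence, of_apply]
    ring
  simp only [sum_congr rfl fun x _ => hpoint x, ite_zero_mul_ite_zero, mul_one,
    sum_add_distrib, sum_sub_distrib, ← mul_sum, sum_boole, sum_const, card_univ,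
    Fintype.card_fun, nsmul_eq_mul]
  push_cast
  rfl

open Classical in
theorem sum_centeredIncidence_mul_centeredIncidence_of_ne_zero (ht : t ≠ 0)
    (hn : 2 ≤ Fintype.card ι) {z z' : ι → F} (hz : z ≠ 0) (hz' : z' ≠ 0) :
    ∑ x, centeredIncidence t x z * centeredIncidence t x z'
      = (if z = z' then (Fintype.card F : ℝ) ^ (Fintype.card ι - 1) else 0)
        - (if (F ∙ z) = (F ∙ z') then (Fintype.card F : ℝ) ^ (Fintype.card ι - 2) else 0) := by
  obtain ⟨m, hm⟩ := Nat.exists_eq_add_of_le' hn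
  have hq : (Fintype.card F : ℝ) ≠ 0 := by positivity
  rw [sum_centeredIncidence_mul_centeredIncidence,
    card_filter_dotProduct_eq_and_dotProduct_eq_of_ne_zero ht hz hz',
    card_filter_dotProduct_eq hz, card_filter_dotProduct_eq hz', hm]
  simp only [Nat.add_sub_cancel, show m + 2 - 1 = m + 1 by omega]
  split_ifs <;> push_cast <;> field_simp <;> ring

theorem sum_sq_sum_compl_zero_centeredIncidence_mul_le (ht : t ≠ 0) (hn : 2 ≤ Fintype.card ι)
    (b : (ι → F) → ℝ) :
    ∑ x, (∑ z ∈ {0}ᶜ, centeredIncidence t x z * b z) ^ 2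
      ≤ (Fintype.card F : ℝ) ^ (Fintype.card ι - 1) * ∑ z ∈ {0}ᶜ, b z ^ 2 := by
  classical
  set q : ℝ := (Fintype.card F : ℝ)
  set n := Fintype.card ι
  set s : Finset (ι → F) := {0}ᶜ
  have hs : ∀ z ∈ s, z ≠ 0 := fun z hz => by simpa [s] using hz
  have hP := sum_sum_ite_apply_eq_mul_nonneg s (fun z => F ∙ z) b
  calc ∑ x, (∑ z ∈ s, centeredIncidence t x z * b z) ^ 2
      = ∑ z ∈ s, ∑ z' ∈ s, b z * b z' * ((if z = z' then q ^ (n - 1) else 0)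
          - (if (F ∙ z) = (F ∙ z') then q ^ (n - 2) else 0)) := by
        rw [sum_sq_sum_mul_eq]
        exact sum_congr rfl fun z hz => sum_congr rfl fun z' hz' => by
          rw [sum_centeredIncidence_mul_centeredIncidence_of_ne_zero ht hn (hs z hz) (hs z' hz')]
    _ = q ^ (n - 1) * ∑ z ∈ s, b z ^ 2 - q ^ (n - 2) *
          ∑ z ∈ s, ∑ z' ∈ s, if (F ∙ z) = (F ∙ z') then b z * b z' else 0 := by
        simp only [mul_sub, sum_sub_distrib, mul_ite, mul_zero, sum_ite_eq, mul_sum]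
        congr 1
        · exact sum_congr rfl fun z hz => by rw [if_pos hz]; ring
        · exact sum_congr rfl fun z _ => sum_congr rfl fun z' _ => by split_ifs <;> ring
    _ ≤ q ^ (n - 1) * ∑ z ∈ s, b z ^ 2 := by
        have : 0 ≤ q ^ (n - 2) := by positivity
        nlinarith

theorem l2OpNormLE_centeredIncidence (ht : t ≠ 0) (hn : 2 ≤ Fintype.card ι) :
    L2OpNormLE (centeredIncidence t : Matrix (ι → F) (ι → F) ℝ)
      √((Fintype.card F : ℝ) ^ (Fintype.card ι - 1)) := by
  intro b
  rw [Real.sq_sqrt (by positivity)]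
  set q : ℝ := (Fintype.card F : ℝ)
  set n := Fintype.card ι
  have hsplit : ∀ x, (centeredIncidence t *ᵥ b) x
      = -q⁻¹ * b 0 + ∑ z ∈ {0}ᶜ, centeredIncidence t x z * b z := fun x => by
    rw [mulVec, dotProduct, Fintype.sum_eq_add_sum_compl 0, centeredIncidence_apply_zero_right ht]
  have horth : ∑ x, ∑ z ∈ {0}ᶜ, centeredIncidence t x z * b z = 0 := by
    rw [sum_comm]
    refine sum_eq_zero fun z hz => ?_
    rw [← sum_mul, sum_centeredIncidence_of_ne_zero (by simpa using hz), zero_mul]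
  calc ∑ x, (centeredIncidence t *ᵥ b) x ^ 2
      = q ^ n * q⁻¹ ^ 2 * b 0 ^ 2 + ∑ x, (∑ z ∈ {0}ᶜ, centeredIncidence t x z * b z) ^ 2 := by
        simp only [hsplit, add_sq, sum_add_distrib, ← mul_sum, horth, sum_const, card_univ,
          Fintype.card_fun, nsmul_eq_mul]
        push_cast
        ring
    _ ≤ q ^ (n - 1) * b 0 ^ 2 + q ^ (n - 1) * ∑ z ∈ {0}ᶜ, b z ^ 2 := by
        gcongr
        · rw [inv_pow, ← pow_sub₀ q (by positivity) hn]
          exact pow_le_pow_right₀ (Nat.one_le_cast.mpr Fintype.card_pos) (by omega)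
        · exact sum_sq_sum_compl_zero_centeredIncidence_mul_le ht hn b
    _ = q ^ (n - 1) * ∑ z, b z ^ 2 := by
        rw [Fintype.sum_eq_add_sum_compl 0 (fun z => b z ^ 2)]
        ring

theorem abs_sum_ite_dotProduct_eq_and_sub_le (ht : t ≠ 0) (hn : 2 ≤ Fintype.card ι)
    (f g : (ι → F) × (ι → F) → ℝ) :
    |(∑ x, ∑ y, ∑ z, ∑ w, if x ⬝ᵥ z = t ∧ y ⬝ᵥ w = t then f (x, y) * g (z, w) else 0)
        - (Fintype.card F : ℝ)⁻¹ ^ 2 * (∑ x, ∑ y, f (x, y)) * ∑ z, ∑ w, g (z, w)|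
      ≤ (Fintype.card F : ℝ) ^ (Fintype.card ι - 1)
          * √(∑ x, ∑ y, f (x, y) ^ 2) * √(∑ z, ∑ w, g (z, w) ^ 2)
        + (Fintype.card F : ℝ)⁻¹ * √((Fintype.card F : ℝ) ^ (Fintype.card ι - 1))
          * (√(∑ x, (∑ y, f (x, y)) ^ 2) * √(∑ z, (∑ w, g (z, w)) ^ 2)
            + √(∑ y, (∑ x, f (x, y)) ^ 2) * √(∑ w, (∑ z, g (z, w)) ^ 2)) := by
  set q : ℝ := (Fintype.card F : ℝ)
  have hK := l2OpNormLE_centeredIncidence (F := F) (ι := ι) ht hn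
  have hind : ∀ x y z w : ι → F,
      (if x ⬝ᵥ z = t ∧ y ⬝ᵥ w = t then f (x, y) * g (z, w) else 0)
        = f (x, y) * g (z, w)
          * ((centeredIncidence t x z + q⁻¹) * (centeredIncidence t y w + q⁻¹)) := by
    intro x y z w
    rw [centeredIncidence_add_inv_card, centeredIncidence_add_inv_card, ite_zero_mul_ite_zero,
      mul_one, mul_ite, mul_one, mul_zero]
  simp only [hind, sum_mul_mul_add_mul_add]
  rw [mul_assoc (q⁻¹ ^ 2), add_sub_cancel_right]
  have hA := (hK.kronecker hK).abs_dotProduct_mulVec_le (by positivity) f g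
  have hB := hK.abs_dotProduct_mulVec_le (Real.sqrt_nonneg _)
    (fun x => ∑ y, f (x, y)) (fun z => ∑ w, g (z, w))
  have hC := hK.abs_dotProduct_mulVec_le (Real.sqrt_nonneg _)
    (fun y => ∑ x, f (x, y)) (fun w => ∑ z, g (z, w))
  rw [Real.mul_self_sqrt (by positivity), Fintype.sum_prod_type, Fintype.sum_prod_type] at hA
  have hq : 0 ≤ q⁻¹ := by positivity
  refine (abs_add_three _ _ _).trans ?_
  rw [abs_mul, abs_mul, abs_of_nonneg hq]
  nlinarith [mul_le_mul_of_nonneg_left hB hq, mul_le_mul_of_nonneg_left hC hq]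

end Kernel

theorem functional_prod_general (F : Type) [Field F] [Fintype F] [DecidableEq F]
    (d : ℕ) (hd : 2 ≤ d) (t : F) (ht : t ≠ 0)
    (q : ℝ) (hq : q = (Fintype.card F : ℝ))
    (f g : (Fin d → F) × (Fin d → F) → ℝ) :
    |(∑ x : Fin d → F, ∑ y : Fin d → F, ∑ z : Fin d → F, ∑ w : Fin d → F,
        if (∑ j, x j * z j = t) ∧ (∑ j, y j * w j = t) then
          f (x, y) * g (z, w) else 0) -
      q ^ (-2 : ℝ) * (∑ x : Fin d → F, ∑ y : Fin d → F, f (x, y)) *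
        (∑ z : Fin d → F, ∑ w : Fin d → F, g (z, w))| ≤
      2 * q ^ ((d : ℝ) - 1) *
        Real.sqrt (∑ x : Fin d → F, ∑ y : Fin d → F, f (x, y) ^ 2) *
        Real.sqrt (∑ z : Fin d → F, ∑ w : Fin d → F, g (z, w) ^ 2) +
      q ^ (((d : ℝ) - 3) / 2) *
        (Real.sqrt (∑ x : Fin d → F, (∑ y : Fin d → F, f (x, y)) ^ 2) *
           Real.sqrt (∑ z : Fin d → F, (∑ w : Fin d → F, g (z, w)) ^ 2) +
         Real.sqrt (∑ y : Fin d → F, (∑ x : Fin d → F, f (x, y)) ^ 2) *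
           Real.sqrt (∑ w : Fin d → F, (∑ z : Fin d → F, g (z, w)) ^ 2)) := by
  subst hq
  have hq0 : (0 : ℝ) < Fintype.card F := Nat.cast_pos.mpr Fintype.card_pos
  have hbound := abs_sum_ite_dotProduct_eq_and_sub_le (ι := Fin d) ht (by simpa using hd) f g
  rw [Fintype.card_fin] at hbound
  have hq1 : (Fintype.card F : ℝ) ^ ((d : ℝ) - 1) = (Fintype.card F : ℝ) ^ (d - 1) := by
    rw [← Real.rpow_natCast, Nat.cast_sub (by omega), Nat.cast_one]
  have hq2 : (Fintype.card F : ℝ) ^ (-2 : ℝ) = (Fintype.card F : ℝ)⁻¹ ^ 2 := by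
    rw [Real.rpow_neg hq0.le, Real.rpow_two, inv_pow]
  have hq3 : (Fintype.card F : ℝ) ^ (((d : ℝ) - 3) / 2)
      = (Fintype.card F : ℝ)⁻¹ * √((Fintype.card F : ℝ) ^ (d - 1)) := by
    rw [Real.sqrt_eq_rpow, ← Real.rpow_natCast, ← Real.rpow_mul hq0.le, ← Real.rpow_neg_one,
      ← Real.rpow_add hq0, Nat.cast_sub (by omega)]
    congr 1
    push_cast
    ring
  rw [hq1, hq2, hq3]
  refine hbound.trans ?_
  have : 0 ≤ (Fintype.card F : ℝ) ^ (d - 1) * √(∑ x, ∑ y, f (x, y) ^ 2)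
      * √(∑ z, ∑ w, g (z, w) ^ 2) := by positivity
  linarith

theorem functional_prod (F : Type) [Field F] [Fintype F] [DecidableEq F]
    (d : ℕ) (hd : 2 ≤ d) (t : F) (ht : t ≠ 0)
    (q : ℝ) (hq : q = (Fintype.card F : ℝ))
    (f g : (Fin d → F) × (Fin d → F) → ℝ)
    (hf : ∀ p, 0 ≤ f p) (hg : ∀ p, 0 ≤ g p) :
    |(∑ x : Fin d → F, ∑ y : Fin d → F, ∑ z : Fin d → F, ∑ w : Fin d → F,
        if (∑ j, x j * z j = t) ∧ (∑ j, y j * w j = t) then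
          f (x, y) * g (z, w) else 0) -
      q ^ (-2 : ℝ) * (∑ x : Fin d → F, ∑ y : Fin d → F, f (x, y)) *
        (∑ z : Fin d → F, ∑ w : Fin d → F, g (z, w))| ≤
      2 * q ^ ((d : ℝ) - 1) *
        Real.sqrt (∑ x : Fin d → F, ∑ y : Fin d → F, f (x, y) ^ 2) *
        Real.sqrt (∑ z : Fin d → F, ∑ w : Fin d → F, g (z, w) ^ 2) +
      q ^ (((d : ℝ) - 3) / 2) *
        (Real.sqrt (∑ x : Fin d → F, (∑ y : Fin d → F, f (x, y)) ^ 2) *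
           Real.sqrt (∑ z : Fin d → F, (∑ w : Fin d → F, g (z, w)) ^ 2) +
         Real.sqrt (∑ y : Fin d → F, (∑ x : Fin d → F, f (x, y)) ^ 2) *
           Real.sqrt (∑ w : Fin d → F, (∑ z : Fin d → F, g (z, w)) ^ 2)) :=
  functional_prod_general F d hd t ht q hq f g
end
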